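/- arXiv:2408.01513 — 4 statements merged into one kernel-verified Lean document; each statement's English description precedes it below -/
import Mathlib

section
/- Let η = (η_1, …, η_w) and η' = (η'_1, …, η'_{w'}) be tuples of nonnegative integers. If there exists a nonnegative integer a with w' + a ≤ w such that η'_i ≤ η_{i+a} for every 1 ≤ i ≤ w', then KPF[η'] ≤ KPF[η]. -/
open Filter

/-- A Kostant picture of height `η : Fin w → ℕ`: an assignment `c i j` of a nonnegative
integer to every pair `i ≤ j` (zero for `j < i`) such that for every `m`, the sum of
`c i j` over all pairs with `i ≤ m ≤ j` equals `η m`. -/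
def IsKostant {w : ℕ} (η : Fin w → ℕ) (c : Fin w → Fin w → ℕ) : Prop :=
  (∀ i j : Fin w, j < i → c i j = 0) ∧
  ∀ m : Fin w, (∑ i : Fin w, ∑ j : Fin w, (if i ≤ m ∧ m ≤ j then c i j else 0)) = η m

/-- Kostant's partition function: the number of Kostant pictures of height `η`. -/
noncomputable def KPF {w : ℕ} (η : Fin w → ℕ) : ℕ :=
  Set.ncard {c : Fin w → Fin w → ℕ | IsKostant η c}

section Aux

variable {w w' : ℕ}

/-- The shift embedding. -/
def kemb (a : ℕ) (hwa : w' + a ≤ w) : Fin w' ↪ Fin w :=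
  ⟨fun i => ⟨i.val + a, by have := i.isLt; omega⟩,
   fun x y h => Fin.ext (by have := congrArg Fin.val h; simp at this; omega)⟩

lemma kemb_val (a : ℕ) (hwa : w' + a ≤ w) (i : Fin w') :
    ((kemb a hwa) i).val = i.val + a := rfl

lemma sum_shift (a : ℕ) (hwa : w' + a ≤ w) (g : Fin w → ℕ)
    (hg : ∀ i : Fin w, (i.val < a ∨ w' + a ≤ i.val) → g i = 0) :
    ∑ i : Fin w, g i = ∑ i' : Fin w', g (kemb a hwa i') := by
  rw [← Finset.sum_map Finset.univ (kemb a hwa) g]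
  symm
  apply Finset.sum_subset (Finset.subset_univ _)
  intro x _ hx
  apply hg
  by_contra h
  push_neg at h
  exact hx (Finset.mem_map.mpr ⟨⟨x.val - a, by omega⟩, Finset.mem_univ _,
    Fin.ext (by simp [kemb_val]; omega)⟩)

lemma kostant_finite (η : Fin w → ℕ) : {c : Fin w → Fin w → ℕ | IsKostant η c}.Finite := by
  apply Set.Finite.subset
    (Set.Finite.pi (fun i : Fin w => Set.Finite.pi (fun _ : Fin w => Set.finite_Iic (η i))))
  intro c hc
  obtain ⟨h0, hsum⟩ := hc
  simp only [Set.mem_pi, Set.mem_univ, forall_true_left, Set.mem_Iic]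
  intro i j
  by_cases hij : j < i
  · rw [h0 i j hij]; exact Nat.zero_le _
  · push_neg at hij
    calc c i j = (if i ≤ i ∧ i ≤ j then c i j else 0) := by simp [hij]
      _ ≤ ∑ j' : Fin w, (if i ≤ i ∧ i ≤ j' then c i j' else 0) :=
          Finset.single_le_sum (f := fun j' => if i ≤ i ∧ i ≤ j' then c i j' else 0)
            (fun _ _ => Nat.zero_le _) (Finset.mem_univ j)
      _ ≤ ∑ i' : Fin w, ∑ j' : Fin w, (if i' ≤ i ∧ i ≤ j' then c i' j' else 0) :=
          Finset.single_le_sum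
            (f := fun i' => ∑ j' : Fin w, (if i' ≤ i ∧ i ≤ j' then c i' j' else 0))
            (fun _ _ => Nat.zero_le _) (Finset.mem_univ i)
      _ = η i := hsum i

end Aux

/-- If the height diagram of `η` covers that of `η'` after shifting by `a`, then
`KPF η' ≤ KPF η`. -/
theorem kpf_mono_of_covers {w w' : ℕ} (η : Fin w → ℕ) (η' : Fin w' → ℕ) (a : ℕ)
    (hwa : w' + a ≤ w)
    (hcover : ∀ (i : ℕ) (hi : i < w') (hia : i + a < w), η' ⟨i, hi⟩ ≤ η ⟨i + a, hia⟩) :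
    KPF η' ≤ KPF η := by
  classical
  set e : Fin w → ℕ := fun m =>
    η m - (if h : a ≤ m.val ∧ m.val - a < w' then η' ⟨m.val - a, h.2⟩ else 0) with he
  set F : (Fin w' → Fin w' → ℕ) → Fin w → Fin w → ℕ := fun c' i j =>
    (if h : a ≤ i.val ∧ i.val - a < w' ∧ a ≤ j.val ∧ j.val - a < w'
      then c' ⟨i.val - a, h.2.1⟩ ⟨j.val - a, h.2.2.2⟩ else 0)
    + (if i = j then e i else 0) with hF
  have hFemb : ∀ (c' : Fin w' → Fin w' → ℕ) (i' j' : Fin w'),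
      F c' (kemb a hwa i') (kemb a hwa j')
        = c' i' j' + (if i' = j' then e (kemb a hwa i') else 0) := by
    intro c' i' j'
    have hi := i'.isLt; have hj := j'.isLt
    have hwin : a ≤ (kemb a hwa i').val ∧ (kemb a hwa i').val - a < w'
        ∧ a ≤ (kemb a hwa j').val ∧ (kemb a hwa j').val - a < w' := by
      refine ⟨?_, ?_, ?_, ?_⟩ <;> simp only [kemb_val] <;> omega
    simp only [hF]
    rw [dif_pos hwin]
    congr 1
    · congr 1 <;> · apply Fin.ext; simp only [kemb_val]; omega
    · rw [if_congr ((kemb a hwa).injective.eq_iff) rfl rfl]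
  have hmem : ∀ c' ∈ {c : Fin w' → Fin w' → ℕ | IsKostant η' c},
      F c' ∈ {c : Fin w → Fin w → ℕ | IsKostant η c} := by
    intro c' hc'
    obtain ⟨h0', hsum'⟩ := hc'
    constructor
    · -- lower triangular
      intro i j hij
      have hne : i ≠ j := by intro h; rw [h] at hij; exact lt_irrefl _ hij
      simp only [hF]
      rw [if_neg hne, add_zero]
      split
      · next h =>
        apply h0'
        rw [Fin.mk_lt_mk]
        have hij' : j.val < i.val := hij
        omega
      · rfl
    · intro m
      have hsplit : ∀ i : Fin w,
          (∑ j : Fin w, (if i ≤ m ∧ m ≤ j then F c' i j else 0))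
            = (∑ j : Fin w, (if i ≤ m ∧ m ≤ j then
                (if h : a ≤ i.val ∧ i.val - a < w' ∧ a ≤ j.val ∧ j.val - a < w'
                  then c' ⟨i.val - a, h.2.1⟩ ⟨j.val - a, h.2.2.2⟩ else 0) else 0))
              + (∑ j : Fin w, (if i ≤ m ∧ m ≤ j then (if i = j then e i else 0) else 0)) := by
        intro i
        rw [← Finset.sum_add_distrib]
        apply Finset.sum_congr rfl
        intro j _
        simp only [hF]
        split <;> simp
      have hdiag : (∑ i : Fin w, ∑ j : Fin w,
          (if i ≤ m ∧ m ≤ j then (if i = j then e i else 0) else 0)) = e m := by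
        rw [Finset.sum_eq_single m]
        · rw [Finset.sum_eq_single m]
          · simp
          · intro j _ hj
            split
            · rw [if_neg (Ne.symm hj)]
            · rfl
          · intro h; exact absurd (Finset.mem_univ m) h
        · intro i _ hi
          apply Finset.sum_eq_zero
          intro j _
          split
          · next h =>
            split
            · next hij =>
              have hm2 : m ≤ i := by rw [hij]; exact h.2
              exact absurd (le_antisymm h.1 hm2) hi
            · rfl
          · rfl
        · intro h; exact absurd (Finset.mem_univ m) h
      set A : Fin w → Fin w → ℕ := fun i j =>
        (if i ≤ m ∧ m ≤ j then
          (if h : a ≤ i.val ∧ i.val - a < w' ∧ a ≤ j.val ∧ j.val - a < w'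
            then c' ⟨i.val - a, h.2.1⟩ ⟨j.val - a, h.2.2.2⟩ else 0) else 0) with hA
      have hAzero : ∀ i j : Fin w,
          (i.val < a ∨ w' + a ≤ i.val ∨ j.val < a ∨ w' + a ≤ j.val) → A i j = 0 := by
        intro i j h
        simp only [hA]
        split
        · exact dif_neg (by omega)
        · rfl
      have hshift : (∑ i : Fin w, ∑ j : Fin w, A i j)
          = ∑ i' : Fin w', ∑ j' : Fin w', A (kemb a hwa i') (kemb a hwa j') := by
        rw [sum_shift a hwa _ (fun i hi => Finset.sum_eq_zero
          (fun j _ => hAzero i j (by omega)))]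
        apply Finset.sum_congr rfl
        intro i' _
        exact sum_shift a hwa _ (fun j hj => hAzero _ j (by omega))
      by_cases hm : a ≤ m.val ∧ m.val - a < w'
      · -- m in window
        set m' : Fin w' := ⟨m.val - a, hm.2⟩ with hm'
        have hmval : m'.val = m.val - a := rfl
        have hval : ∀ i' j' : Fin w', A (kemb a hwa i') (kemb a hwa j')
            = (if i' ≤ m' ∧ m' ≤ j' then c' i' j' else 0) := by
          intro i' j'
          have hi := i'.isLt; have hj := j'.isLt
          simp only [hA]
          have h1 : (kemb a hwa i' ≤ m ∧ m ≤ kemb a hwa j') ↔ (i' ≤ m' ∧ m' ≤ j') := by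
            simp only [Fin.le_def, kemb_val, hmval]
            constructor <;> intro ⟨u, v⟩ <;> exact ⟨by omega, by omega⟩
          rw [if_congr h1 rfl rfl]
          split
          · rw [dif_pos (by refine ⟨?_, ?_, ?_, ?_⟩ <;> simp only [kemb_val] <;> omega)]
            congr 1 <;> · apply Fin.ext; simp only [kemb_val]; omega
          · rfl
        have hsum'' : (∑ i : Fin w, ∑ j : Fin w, A i j) = η' m' := by
          rw [hshift]
          rw [show (∑ i' : Fin w', ∑ j' : Fin w', A (kemb a hwa i') (kemb a hwa j'))
            = ∑ i' : Fin w', ∑ j' : Fin w', (if i' ≤ m' ∧ m' ≤ j' then c' i' j' else 0) from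
            Finset.sum_congr rfl (fun i' _ => Finset.sum_congr rfl (fun j' _ => hval i' j'))]
          exact hsum' m'
        have hle : η' m' ≤ η m := by
          have h2 := hcover (m.val - a) hm.2 (by have := m.isLt; omega)
          have h3 : (⟨m.val - a + a, by have := m.isLt; omega⟩ : Fin w) = m :=
            Fin.ext (by simp; omega)
          rw [h3] at h2
          exact h2
        have hem : e m = η m - η' m' := by
          simp only [he]
          rw [dif_pos hm]
        calc (∑ i : Fin w, ∑ j : Fin w, (if i ≤ m ∧ m ≤ j then F c' i j else 0))
            = (∑ i : Fin w, ∑ j : Fin w, A i j) + e m := by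
              rw [← hdiag, ← Finset.sum_add_distrib]
              exact Finset.sum_congr rfl (fun i _ => hsplit i)
          _ = η' m' + (η m - η' m') := by rw [hsum'', hem]
          _ = η m := by omega
      · -- m not in window
        have hAz : ∀ i' j' : Fin w', A (kemb a hwa i') (kemb a hwa j') = 0 := by
          intro i' j'
          have hi := i'.isLt; have hj := j'.isLt
          simp only [hA]
          rw [if_neg]
          intro ⟨u, v⟩
          rw [Fin.le_def] at u v
          simp only [kemb_val] at u v
          omega
        have hem : e m = η m := by
          simp only [he]
          rw [dif_neg hm]
          omega
        calc (∑ i : Fin w, ∑ j : Fin w, (if i ≤ m ∧ m ≤ j then F c' i j else 0))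
            = (∑ i : Fin w, ∑ j : Fin w, A i j) + e m := by
              rw [← hdiag, ← Finset.sum_add_distrib]
              exact Finset.sum_congr rfl (fun i _ => hsplit i)
          _ = 0 + e m := by
              rw [hshift]
              congr 1
              exact Finset.sum_eq_zero (fun i' _ => Finset.sum_eq_zero (fun j' _ => hAz i' j'))
          _ = η m := by rw [hem, Nat.zero_add]
  have hinj : Function.Injective F := by
    intro c1 c2 h
    funext i' j'
    have h1 := hFemb c1 i' j'
    have h2 := hFemb c2 i' j'
    rw [h] at h1
    exact Nat.add_right_cancel (h1.symm.trans h2)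
  exact Set.ncard_le_ncard_of_injOn F hmem (hinj.injOn) (kostant_finite η)
end

section
/- As n → ∞, L(1, 2, …, n) ≍ L[n², n]; that is, there exist constants 0 < a ≤ b such that a · L[n², n] ≤ ln|T(1, 2, …, n)| ≤ b · L[n², n] for all large n. -/
open Filter

/-- `L[h,w] = ln KPF[(h,…,h)]` for the constant tuple of length `w`. -/
noncomputable def Lbox (h w : ℕ) : ℝ := Real.log (KPF (fun _ : Fin w => h))

/-- A generalized Tesler matrix with hook sum vector `h`. -/
def IsTesler {n : ℕ} (h : Fin n → ℤ) (A : Fin n → Fin n → ℕ) : Prop :=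
  (∀ i j : Fin n, j < i → A i j = 0) ∧
  ∀ k : Fin n, (∑ i : Fin n, if k ≤ i then (A k i : ℤ) else 0)
    - (∑ i : Fin n, if i < k then (A i k : ℤ) else 0) = h k

/-- `L(h) = ln |T(h)|`. -/
noncomputable def LTes {n : ℕ} (h : Fin n → ℤ) : ℝ :=
  Real.log (Set.ncard {A : Fin n → Fin n → ℕ | IsTesler h A})

/-!
Both quantities are of order `n²`.

Upper bound: Kostant pictures of height `(n², …, n²)` and Tesler matrices with hook sums
`(1, …, n)` are upper triangular with `∑ w i j * A i j ≤ n³`, where in each row the weights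
`w i j` (`i ≤ j`) are distinct elements of `[1, n]`: `w i j = j - i + 1` counts the heights an entry
contributes to, and pairing the hook sums with the coefficients `n - k` gives `n - i` on the
diagonal and `j - i` above it. A Chernoff bound with parameter `1 / n` counts such matrices by
`e^{n²} ∏ 2n / w i j`, and `∏_{m ≤ n} 2n / m = (2n)ⁿ / n! ≤ e^{2n}` for each row.

Lower bound: any 0/1 matrix of size `⌊n/3⌋` placed strictly above the diagonal completes, through a
suitable diagonal, to a Kostant picture and to a Tesler matrix, giving `2^{⌊n/3⌋²}` of each.
-/

open Finset Real

section WeightedCount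

variable {ι : Type*} [Fintype ι]

theorem le_of_sum_mul_le {w x : ι → ℕ} (hw : ∀ i, 1 ≤ w i) {N : ℕ} (hx : ∑ i, w i * x i ≤ N)
    (i : ι) : x i ≤ N := by
  have hi : w i * x i ≤ N :=
    (single_le_sum (f := fun i => w i * x i) (fun _ _ => Nat.zero_le _) (mem_univ i)).trans hx
  nlinarith [hw i]

theorem finite_setOf_sum_mul_le (w : ι → ℕ) (hw : ∀ i, 1 ≤ w i) (N : ℕ) :
    {x : ι → ℕ | ∑ i, w i * x i ≤ N}.Finite := by
  classical
  refine (Fintype.piFinset fun _ => range (N + 1)).finite_toSet.subset fun x hx => ?_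
  simpa [Nat.lt_succ_iff] using le_of_sum_mul_le hw hx

theorem ncard_setOf_sum_mul_le_le (w : ι → ℕ) (hw : ∀ i, 1 ≤ w i) (N : ℕ) {s : ℝ} (hs : 0 < s) :
    ({x : ι → ℕ | ∑ i, w i * x i ≤ N}.ncard : ℝ)
      ≤ exp (s * N) * ∏ i, (1 - exp (-(s * w i)))⁻¹ := by
  classical
  set r : ι → ℝ := fun i => exp (-(s * w i))
  have hr0 : ∀ i, 0 ≤ r i := fun i => (exp_pos _).le
  have hr1 : ∀ i, r i < 1 := fun i => exp_lt_one_iff.2 <| by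
    have : (1 : ℝ) ≤ w i := by exact_mod_cast hw i
    nlinarith
  set B := Fintype.piFinset fun _ : ι => range (N + 1)
  set P : (ι → ℕ) → Prop := fun x => ∑ i, w i * x i ≤ N
  have hS : {x | P x} = ↑(B.filter P) := by
    ext x
    simpa [B, P, Nat.lt_succ_iff] using fun hx => le_of_sum_mul_le hw hx
  -- Markov's inequality: `exp (s * (N - ∑ i, w i * x i)) ≥ 1` on the set
  have hone : ∀ x, P x → 1 ≤ exp (s * N) * ∏ i, r i ^ x i := by
    intro x hx
    have hx' : (∑ i, (w i : ℝ) * x i) ≤ N := by exact_mod_cast hx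
    have : exp (s * N) * ∏ i, r i ^ x i = exp (s * (N - ∑ i, (w i : ℝ) * x i)) := by
      simp only [r, ← exp_nat_mul, ← exp_sum, ← exp_add, mul_sub, mul_sum]
      congr 1
      rw [sub_eq_add_neg, ← sum_neg_distrib]
      congr 1
      exact sum_congr rfl fun i _ => by ring
    rw [this]
    exact one_le_exp (mul_nonneg hs.le (sub_nonneg.2 hx'))
  calc ({x | P x}.ncard : ℝ) = ∑ x ∈ B.filter P, (1 : ℝ) := by
        rw [hS, Set.ncard_coe_finset, sum_const, nsmul_one]
    _ ≤ ∑ x ∈ B.filter P, exp (s * N) * ∏ i, r i ^ x i :=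
        sum_le_sum fun x hx => hone x (mem_filter.1 hx).2
    _ ≤ ∑ x ∈ B, exp (s * N) * ∏ i, r i ^ x i :=
        sum_le_sum_of_subset_of_nonneg (filter_subset _ _) fun _ _ _ => by positivity
    _ = exp (s * N) * ∏ i, ∑ t ∈ range (N + 1), r i ^ t := by
        rw [← mul_sum, prod_univ_sum]
    _ ≤ exp (s * N) * ∏ i, (1 - r i)⁻¹ := by
        gcongr with i
        have := geom_sum_Ico_le_of_lt_one (m := 0) (n := N + 1) (hr0 i) (hr1 i)
        rwa [← range_eq_Ico, pow_zero, one_div] at this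

end WeightedCount

theorem inv_one_sub_exp_neg_le {u : ℝ} (hu0 : 0 < u) (hu1 : u ≤ 1) :
    (1 - exp (-u))⁻¹ ≤ 2 / u := by
  have hexp : exp (-u) * (1 + u) ≤ 1 := by
    calc exp (-u) * (1 + u) ≤ exp (-u) * exp u := by gcongr; linarith [add_one_le_exp u]
      _ = 1 := by rw [← exp_add, neg_add_cancel, exp_zero]
  have hhalf : u / 2 ≤ 1 - exp (-u) := by nlinarith [exp_pos (-u)]
  simpa [inv_div] using inv_anti₀ (by positivity) hhalf

theorem prod_inv_one_sub_exp_neg_le {ι : Type*} [Fintype ι] {n : ℕ} (hn : 0 < n) (w : ι → ℕ)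
    (hw : ∀ i, w i ∈ Icc 1 n) :
    ∏ i, (1 - exp (-((n : ℝ)⁻¹ * w i)))⁻¹ ≤ ∏ i, (2 * n / w i : ℝ) := by
  have hn' : (0 : ℝ) < n := by exact_mod_cast hn
  refine prod_le_prod (fun i _ => ?_) fun i _ => ?_
  · have : 0 ≤ (n : ℝ)⁻¹ * w i := by positivity
    exact inv_nonneg.2 (sub_nonneg.2 (exp_le_one_iff.2 (neg_nonpos.2 this)))
  obtain ⟨hi1, hin⟩ := mem_Icc.1 (hw i)
  have hi1' : (1 : ℝ) ≤ w i := by exact_mod_cast hi1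
  have hin' : (w i : ℝ) ≤ n := by exact_mod_cast hin
  calc (1 - exp (-((n : ℝ)⁻¹ * w i)))⁻¹ ≤ 2 / ((n : ℝ)⁻¹ * w i) :=
        inv_one_sub_exp_neg_le (by positivity) (by rwa [inv_mul_le_one₀ hn'])
    _ = 2 * n / w i := by field_simp

theorem prod_two_mul_div_le_exp {α : Type*} {n : ℕ} (s : Finset α) (f : α → ℕ)
    (hf : ∀ j ∈ s, f j ∈ Icc 1 n) (hinj : Set.InjOn f s) :
    ∏ j ∈ s, (2 * n / f j : ℝ) ≤ exp (2 * n) := by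
  classical
  have hfact : ∏ m ∈ Icc 1 n, (m : ℝ) = n.factorial := by
    rw [← Nat.cast_prod, ← Ico_add_one_right_eq_Icc, prod_Ico_id_eq_factorial]
  calc ∏ j ∈ s, (2 * n / f j : ℝ) = ∏ m ∈ s.image f, (2 * n / m : ℝ) := by
        rw [prod_image hinj]
    _ ≤ ∏ m ∈ Icc 1 n, (2 * n / m : ℝ) := by
        refine prod_le_prod_of_subset_of_one_le (fun m hm => ?_) (fun _ _ => by positivity)
          fun m hm _ => ?_
        · obtain ⟨j, hj, rfl⟩ := mem_image.1 hm
          exact hf j hj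
        · obtain ⟨hm1, hmn⟩ := mem_Icc.1 hm
          rw [one_le_div (by exact_mod_cast hm1)]
          have : (m : ℝ) ≤ n := by exact_mod_cast hmn
          linarith
    _ = 2 ^ n * (n ^ n / n.factorial) := by
        rw [prod_div_distrib, prod_const, hfact, Nat.card_Icc, Nat.add_sub_cancel, mul_pow,
          mul_div_assoc]
    _ ≤ exp 1 ^ n * exp n := by
        gcongr
        · linarith [add_one_le_exp 1]
        · exact pow_div_factorial_le_exp _ (Nat.cast_nonneg n) n
    _ = exp (2 * n) := by rw [← exp_nat_mul, ← exp_add]; ring_nf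

section UpperTriangular

variable {n : ℕ}

def weightedUpperSet (w : Fin n → Fin n → ℕ) (N : ℕ) : Set (Fin n → Fin n → ℕ) :=
  {A | Matrix.BlockTriangular A id ∧ ∑ i, ∑ j, w i j * A i j ≤ N}

def upperEntries (A : Fin n → Fin n → ℕ) : (Σ i : Fin n, {j // i ≤ j}) → ℕ :=
  fun p => A p.1 p.2

theorem injOn_upperEntries :
    Set.InjOn upperEntries {A : Fin n → Fin n → ℕ | Matrix.BlockTriangular A id} := by
  intro A hA B hB h
  funext i j
  rcases le_or_gt i j with hij | hji
  · exact congrFun h ⟨i, j, hij⟩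
  · rw [hA hji, hB hji]

theorem sum_mul_eq_sum_mul_upperEntries {A : Fin n → Fin n → ℕ}
    (hA : Matrix.BlockTriangular A id) (w : Fin n → Fin n → ℕ) :
    ∑ i, ∑ j, w i j * A i j = ∑ p, w p.1 p.2 * upperEntries A p := by
  rw [Fintype.sum_sigma]
  refine sum_congr rfl fun i _ => ?_
  have hlower : ∑ j : {j // ¬i ≤ j}, w i j * A i j = 0 :=
    sum_eq_zero fun j _ => by rw [hA (not_le.1 j.2), mul_zero]
  rw [← Fintype.sum_subtype_add_sum_subtype (fun j => i ≤ j) (fun j => w i j * A i j), hlower,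
    add_zero]
  rfl

theorem mapsTo_upperEntries (w : Fin n → Fin n → ℕ) (N : ℕ) :
    Set.MapsTo upperEntries (weightedUpperSet w N)
      {x : (Σ i : Fin n, {j // i ≤ j}) → ℕ | ∑ p, w p.1 p.2 * x p ≤ N} :=
  fun A hA => by simpa [sum_mul_eq_sum_mul_upperEntries hA.1] using hA.2

theorem finite_weightedUpperSet (w : Fin n → Fin n → ℕ) (hw : ∀ i j, i ≤ j → 1 ≤ w i j)
    (N : ℕ) : (weightedUpperSet w N).Finite :=
  (finite_setOf_sum_mul_le _ (fun p => hw _ _ p.2.2) N).of_injOn (mapsTo_upperEntries w N)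
    (injOn_upperEntries.mono fun _ hA => hA.1)

theorem ncard_le_exp_of_subset_weightedUpperSet (hn : 0 < n) {w : Fin n → Fin n → ℕ}
    (hw : ∀ i j, i ≤ j → w i j ∈ Icc 1 n) (hinj : ∀ i, Set.InjOn (w i) (Set.Ici i))
    {T : Set (Fin n → Fin n → ℕ)} (hT : T ⊆ weightedUpperSet w (n ^ 3)) :
    (T.ncard : ℝ) ≤ exp (3 * n ^ 2) := by
  set w' : (Σ i : Fin n, {j // i ≤ j}) → ℕ := fun p => w p.1 p.2
  have hw' : ∀ p, w' p ∈ Icc 1 n := fun p => hw _ _ p.2.2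
  have hn' : (0 : ℝ) < n := by exact_mod_cast hn
  have hcard : T.ncard ≤ {x : (Σ i : Fin n, {j // i ≤ j}) → ℕ | ∑ p, w' p * x p ≤ n ^ 3}.ncard :=
    Set.ncard_le_ncard_of_injOn _ ((mapsTo_upperEntries w _).mono_left hT)
      (injOn_upperEntries.mono fun _ hA => (hT hA).1)
      (finite_setOf_sum_mul_le _ (fun p => (mem_Icc.1 (hw' p)).1) _)
  calc (T.ncard : ℝ) ≤ exp ((n : ℝ)⁻¹ * (n ^ 3 : ℕ)) * ∏ p, (1 - exp (-((n : ℝ)⁻¹ * w' p)))⁻¹ :=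
        (Nat.cast_le.2 hcard).trans <|
          ncard_setOf_sum_mul_le_le _ (fun p => (mem_Icc.1 (hw' p)).1) _ (inv_pos.2 hn')
    _ ≤ exp (n ^ 2) * ∏ p, (2 * n / w' p : ℝ) := by
        have hexp : (n : ℝ)⁻¹ * (n ^ 3 : ℕ) = n ^ 2 := by push_cast; field_simp
        rw [hexp]
        exact mul_le_mul_of_nonneg_left (prod_inv_one_sub_exp_neg_le hn w' hw') (exp_pos _).le
    _ = exp (n ^ 2) * ∏ i, ∏ j : {j // i ≤ j}, (2 * n / w i j : ℝ) := by
        rw [Fintype.prod_sigma]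
    _ ≤ exp (n ^ 2) * ∏ _i : Fin n, exp (2 * n) := by
        gcongr with i
        exact prod_two_mul_div_le_exp _ _ (fun j _ => hw i j j.2)
            fun j _ k _ h => Subtype.ext (hinj i j.2 k.2 h)
    _ = exp (3 * n ^ 2) := by
        rw [prod_const, card_univ, Fintype.card_fin, ← exp_nat_mul, ← exp_add]
        ring_nf

end UpperTriangular

section Kostant
variable {n : ℕ}

def kostantHeight (c : Matrix (Fin n) (Fin n) ℕ) (m : Fin n) : ℕ :=
  ∑ i, ∑ j, if i ≤ m ∧ m ≤ j then c i j else 0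

theorem kostantHeight_add (B C : Matrix (Fin n) (Fin n) ℕ) (m : Fin n) :
    kostantHeight (B + C) m = kostantHeight B m + kostantHeight C m := by
  simp only [kostantHeight, Matrix.add_apply, ite_add_zero, sum_add_distrib]

theorem kostantHeight_diagonal (d : Fin n → ℕ) (m : Fin n) :
    kostantHeight (Matrix.diagonal d) m = d m := by
  rw [kostantHeight, sum_eq_single m (fun i _ hi => sum_eq_zero fun j _ => ?_) (by simp),
    sum_eq_single m (fun j _ hj => ?_) (by simp)]
  · simp
  · simp [Ne.symm hj]
  · rw [Matrix.diagonal_apply]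
    split_ifs with h1 h2 <;> first | rfl | exact absurd (le_antisymm h1.1 (h2 ▸ h1.2)) hi

theorem kostantHeight_le_sum (c : Matrix (Fin n) (Fin n) ℕ) (m : Fin n) :
    kostantHeight c m ≤ ∑ i, ∑ j, c i j :=
  sum_le_sum fun i _ => sum_le_sum fun j _ => by split_ifs <;> simp

theorem sum_kostantHeight (c : Matrix (Fin n) (Fin n) ℕ) :
    ∑ m, kostantHeight c m = ∑ i, ∑ j, #(Icc i j) * c i j := by
  simp only [kostantHeight]
  rw [sum_comm]
  refine sum_congr rfl fun i _ => ?_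
  rw [sum_comm]
  refine sum_congr rfl fun j _ => ?_
  rw [← sum_filter, sum_const, smul_eq_mul]
  congr 2
  ext m
  simp

theorem isKostant_iff {η : Fin n → ℕ} {c : Matrix (Fin n) (Fin n) ℕ} :
    IsKostant η c ↔ c.BlockTriangular id ∧ ∀ m, kostantHeight c m = η m :=
  ⟨fun h => ⟨fun _ _ hij => h.1 _ _ hij, h.2⟩, fun h => ⟨fun _ _ hij => h.1 hij, h.2⟩⟩

theorem isKostant_add_diagonal {η : Fin n → ℕ} {B : Matrix (Fin n) (Fin n) ℕ}
    (hB : B.BlockTriangular id) (hle : ∀ m, kostantHeight B m ≤ η m) :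
    IsKostant η (B + Matrix.diagonal fun m => η m - kostantHeight B m) := by
  refine isKostant_iff.2 ⟨hB.add (Matrix.blockTriangular_diagonal _), fun m => ?_⟩
  rw [kostantHeight_add, kostantHeight_diagonal]
  exact Nat.add_sub_cancel' (hle m)

end Kostant

section Tesler
variable {n : ℕ}

def hookSum (A : Matrix (Fin n) (Fin n) ℕ) (k : Fin n) : ℤ :=
  (∑ i, if k ≤ i then (A k i : ℤ) else 0) - ∑ i, if i < k then (A i k : ℤ) else 0

theorem hookSum_add (B C : Matrix (Fin n) (Fin n) ℕ) (k : Fin n) :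
    hookSum (B + C) k = hookSum B k + hookSum C k := by
  simp only [hookSum, Matrix.add_apply, Nat.cast_add, ite_add_zero, sum_add_distrib]
  ring

theorem hookSum_diagonal (d : Fin n → ℕ) (k : Fin n) :
    hookSum (Matrix.diagonal d) k = d k := by
  have hrow : (∑ i, if k ≤ i then ((Matrix.diagonal d k i : ℕ) : ℤ) else 0) = d k := by
    rw [sum_eq_single k (fun i _ hi => by simp [Ne.symm hi]) (by simp)]
    simp
  have hcol : (∑ i, if i < k then ((Matrix.diagonal d i k : ℕ) : ℤ) else 0) = 0 :=
    sum_eq_zero fun i _ => by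
      split_ifs with hi
      · simp [hi.ne]
      · rfl
  rw [hookSum, hrow, hcol, sub_zero]

theorem hookSum_le_sum (A : Matrix (Fin n) (Fin n) ℕ) (k : Fin n) :
    hookSum A k ≤ ∑ i, (A k i : ℤ) := by
  have hrow : (∑ i, if k ≤ i then (A k i : ℤ) else 0) ≤ ∑ i, (A k i : ℤ) :=
    sum_le_sum fun i _ => by split_ifs <;> simp
  have hcol : 0 ≤ ∑ i, if i < k then (A i k : ℤ) else 0 :=
    sum_nonneg fun i _ => by split_ifs <;> simp
  rw [hookSum]
  linarith

theorem isTesler_iff {h : Fin n → ℤ} {A : Matrix (Fin n) (Fin n) ℕ} :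
    IsTesler h A ↔ A.BlockTriangular id ∧ ∀ k, hookSum A k = h k :=
  ⟨fun hA => ⟨fun _ _ hij => hA.1 _ _ hij, hA.2⟩, fun hA => ⟨fun _ _ hij => hA.1 hij, hA.2⟩⟩

theorem isTesler_add_diagonal {h : Fin n → ℤ} {B : Matrix (Fin n) (Fin n) ℕ}
    (hB : B.BlockTriangular id) (hle : ∀ k, hookSum B k ≤ h k) :
    IsTesler h (B + Matrix.diagonal fun k => (h k - hookSum B k).toNat) := by
  refine isTesler_iff.2 ⟨hB.add (Matrix.blockTriangular_diagonal _), fun k => ?_⟩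
  rw [hookSum_add, hookSum_diagonal, Int.toNat_of_nonneg (sub_nonneg.2 (hle k))]
  ring

theorem sum_mul_hookSum (c : Fin n → ℤ) (A : Matrix (Fin n) (Fin n) ℕ) :
    ∑ k, c k * hookSum A k
      = ∑ i, ∑ j, ((if i ≤ j then c i else 0) - if i < j then c j else 0) * A i j := by
  simp only [hookSum, mul_sub, mul_sum, sub_mul, sum_sub_distrib, mul_ite, mul_zero, ite_mul,
    zero_mul]
  congr 1
  exact sum_comm

-- The coefficient of `A i j` in `∑ k, (n - k) * hookSum A k`, for `i ≤ j`.
def teslerWeight (i j : Fin n) : ℕ := if i = j then n - i else j - i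

theorem sum_teslerWeight_mul {A : Matrix (Fin n) (Fin n) ℕ} (hA : A.BlockTriangular id) :
    ((∑ i, ∑ j, teslerWeight i j * A i j : ℕ) : ℤ) = ∑ k, ((n : ℤ) - k) * hookSum A k := by
  rw [sum_mul_hookSum]
  push_cast
  refine sum_congr rfl fun i _ => sum_congr rfl fun j _ => ?_
  rcases lt_trichotomy i j with hij | rfl | hji
  · simp [teslerWeight, hij.ne, hij.le, hij, Nat.cast_sub (Fin.le_def.1 hij.le)]
  · simp [teslerWeight, Nat.cast_sub i.isLt.le]
  · simp [hA hji]

theorem teslerWeight_mem_Icc {i j : Fin n} (hij : i ≤ j) : teslerWeight i j ∈ Icc 1 n := by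
  rw [Fin.le_iff_val_le_val] at hij
  have := j.isLt
  unfold teslerWeight
  rw [mem_Icc]
  split_ifs with h
  · subst h; omega
  · have : (i : ℕ) ≠ j := Fin.val_ne_of_ne h
    omega

theorem injOn_teslerWeight (i : Fin n) : Set.InjOn (teslerWeight i) (Set.Ici i) := by
  intro j hj k hk h
  simp only [Set.mem_Ici, Fin.le_iff_val_le_val] at hj hk
  have := j.isLt; have := k.isLt
  unfold teslerWeight at h
  split_ifs at h with h1 h2 h2 <;> first | exact h1.symm.trans h2 | omega

end Tesler

section Counting
variable {n : ℕ}

theorem card_Icc_mem_Icc {i j : Fin n} (hij : i ≤ j) : #(Icc i j) ∈ Icc 1 n := by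
  rw [Fin.le_iff_val_le_val] at hij
  have := j.isLt
  rw [Fin.card_Icc, mem_Icc]
  omega

theorem injOn_card_Icc (i : Fin n) : Set.InjOn (fun j => #(Icc i j)) (Set.Ici i) := by
  intro j hj k hk h
  simp only [Set.mem_Ici, Fin.le_iff_val_le_val] at hj hk
  simp only [Fin.card_Icc] at h
  exact Fin.ext (by omega)

theorem setOf_isKostant_subset {η : Fin n → ℕ} {N : ℕ} (hN : ∑ m, η m ≤ N) :
    {c | IsKostant η c} ⊆ weightedUpperSet (fun i j => #(Icc i j)) N := by
  intro c hc
  obtain ⟨hc, hheight⟩ := isKostant_iff.1 hc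
  refine ⟨hc, (sum_kostantHeight c).symm.le.trans ?_⟩
  rwa [sum_congr rfl fun m _ => hheight m]

theorem setOf_isTesler_subset {h : Fin n → ℤ} {N : ℕ} (hN : ∑ k, ((n : ℤ) - k) * h k ≤ N) :
    {A | IsTesler h A} ⊆ weightedUpperSet teslerWeight N := by
  intro A hA
  obtain ⟨hA, hhook⟩ := isTesler_iff.1 hA
  refine ⟨hA, ?_⟩
  rw [← Nat.cast_le (α := ℤ), sum_teslerWeight_mul hA]
  simpa only [hhook] using hN

theorem finite_setOf_isKostant (η : Fin n → ℕ) : {c | IsKostant η c}.Finite :=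
  (finite_weightedUpperSet _ (fun _ _ hij => (mem_Icc.1 (card_Icc_mem_Icc hij)).1) _).subset
    (setOf_isKostant_subset le_rfl)

theorem finite_setOf_isTesler (h : Fin n → ℤ) : {A | IsTesler h A}.Finite :=
  (finite_weightedUpperSet _ (fun _ _ hij => (mem_Icc.1 (teslerWeight_mem_Icc hij)).1) _).subset
    (setOf_isTesler_subset (Int.self_le_toNat _))

theorem KPF_le_exp (hn : 0 < n) : (KPF fun _ : Fin n => n ^ 2 : ℝ) ≤ exp (3 * n ^ 2) := by
  have hN : ∑ _m : Fin n, n ^ 2 ≤ n ^ 3 := by simp [pow_succ']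
  exact ncard_le_exp_of_subset_weightedUpperSet hn (fun _ _ => card_Icc_mem_Icc) injOn_card_Icc
    (setOf_isKostant_subset hN)

theorem ncard_setOf_isTesler_le_exp (hn : 0 < n) :
    ({A | IsTesler (fun k : Fin n => (k : ℤ) + 1) A}.ncard : ℝ) ≤ exp (3 * n ^ 2) := by
  have hN : ∑ k : Fin n, ((n : ℤ) - k) * (k + 1) ≤ (n ^ 3 : ℕ) := by
    calc ∑ k : Fin n, ((n : ℤ) - k) * (k + 1) ≤ ∑ _k : Fin n, (n : ℤ) * n :=
          sum_le_sum fun k _ => by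
            have : (k : ℤ) + 1 ≤ n := by exact_mod_cast k.isLt
            have : (0 : ℤ) ≤ k := by positivity
            nlinarith
      _ = (n ^ 3 : ℕ) := by simp [pow_succ']
  exact ncard_le_exp_of_subset_weightedUpperSet hn (fun _ _ => teslerWeight_mem_Icc)
    injOn_teslerWeight (setOf_isTesler_subset hN)

end Counting

section BlockEmbedding
variable {n q : ℕ}

-- Rows start at `q` so that each row sum is at most the row index (`sum_blockEmbed_le`).
def blockEmbed (q : ℕ) (E : Fin q → Fin q → Fin 2) : Matrix (Fin n) (Fin n) ℕ :=
  fun i j => if h : q ≤ i ∧ (i : ℕ) < 2 * q ∧ 2 * q ≤ j ∧ (j : ℕ) < 3 * q then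
    E ⟨i - q, by omega⟩ ⟨j - 2 * q, by omega⟩ else 0

theorem blockEmbed_apply {E : Fin q → Fin q → Fin 2} {i j : Fin n} {a b : Fin q}
    (hi : (i : ℕ) = q + a) (hj : (j : ℕ) = 2 * q + b) : blockEmbed q E i j = E a b := by
  have := a.isLt; have := b.isLt
  rw [blockEmbed, dif_pos (by omega)]
  congr 2 <;> exact Fin.ext (by simp only; omega)

theorem blockTriangular_blockEmbed (E : Fin q → Fin q → Fin 2) :
    (blockEmbed q E : Matrix (Fin n) (Fin n) ℕ).BlockTriangular id := by
  intro i j hji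
  rw [blockEmbed, dif_neg]
  have : (j : ℕ) < i := hji
  omega

theorem sum_blockEmbed_le (E : Fin q → Fin q → Fin 2) (k : Fin n) :
    ∑ j, blockEmbed q E k j ≤ k := by
  rcases lt_or_ge (k : ℕ) q with hk | hk
  · rw [sum_eq_zero fun j _ => dif_neg (by omega)]
    exact Nat.zero_le _
  calc ∑ j, blockEmbed q E k j ≤ ∑ j : Fin n, if 2 * q ≤ j ∧ (j : ℕ) < 3 * q then 1 else 0 :=
        sum_le_sum fun j _ => by
          unfold blockEmbed
          split_ifs with h1 h2
          · exact Nat.lt_succ_iff.1 (Fin.isLt _)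
          · exact absurd ⟨h1.2.2.1, h1.2.2.2⟩ h2
          · exact Nat.zero_le _
          · exact Nat.zero_le _
    _ = #{j : Fin n | 2 * q ≤ j ∧ (j : ℕ) < 3 * q} := by rw [card_filter]
    _ ≤ #(Ico (2 * q) (3 * q)) :=
        card_le_card_of_injOn Fin.val (fun j hj => by simpa using hj) Fin.val_injective.injOn
    _ ≤ k := by rw [Nat.card_Ico]; omega

theorem kostantHeight_blockEmbed_le (E : Fin q → Fin q → Fin 2) (m : Fin n) :
    kostantHeight (blockEmbed q E) m ≤ n ^ 2 :=
  calc kostantHeight (blockEmbed q E) m ≤ ∑ i, ∑ j, blockEmbed q E i j :=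
        kostantHeight_le_sum _ m
    _ ≤ ∑ _i : Fin n, n := sum_le_sum fun i _ => (sum_blockEmbed_le E i).trans i.isLt.le
    _ = n ^ 2 := by simp [sq]

theorem hookSum_blockEmbed_le (E : Fin q → Fin q → Fin 2) (k : Fin n) :
    hookSum (blockEmbed q E) k ≤ k + 1 :=
  calc hookSum (blockEmbed q E) k ≤ ∑ i, (blockEmbed q E k i : ℤ) := hookSum_le_sum _ k
    _ ≤ k := by exact_mod_cast sum_blockEmbed_le E k
    _ ≤ k + 1 := by omega

theorem two_pow_le_ncard_of_blockEmbed_add_diagonal_mem {T : Set (Matrix (Fin n) (Fin n) ℕ)}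
    (hT : T.Finite) (h3q : 3 * q ≤ n) (d : Matrix (Fin n) (Fin n) ℕ → Fin n → ℕ)
    (hmem : ∀ E, blockEmbed q E + Matrix.diagonal (d (blockEmbed q E)) ∈ T) :
    2 ^ (q * q) ≤ T.ncard := by
  have hinj : Function.Injective fun E => (⟨_, hmem E⟩ : T) := by
    intro E E' h
    funext a b
    have hab := congr_fun₂ (congrArg Subtype.val h) ⟨q + a, by omega⟩ ⟨2 * q + b, by omega⟩
    have hne : (⟨q + a, by omega⟩ : Fin n) ≠ ⟨2 * q + b, by omega⟩ := by
      simp only [ne_eq, Fin.mk.injEq]; omega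
    simp only [Matrix.add_apply, Matrix.diagonal_apply_ne _ hne, add_zero] at hab
    rw [blockEmbed_apply rfl rfl, blockEmbed_apply rfl rfl] at hab
    exact Fin.ext (by exact_mod_cast hab)
  have := hT.to_subtype
  simpa [Nat.card_coe_set_eq, pow_mul] using Nat.card_le_card_of_injective _ hinj

theorem two_pow_le_KPF (h3q : 3 * q ≤ n) : 2 ^ (q * q) ≤ KPF fun _ : Fin n => n ^ 2 :=
  two_pow_le_ncard_of_blockEmbed_add_diagonal_mem (finite_setOf_isKostant _) h3q
    (fun B m => n ^ 2 - kostantHeight B m) fun E =>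
    isKostant_add_diagonal (blockTriangular_blockEmbed E) (kostantHeight_blockEmbed_le E)

theorem two_pow_le_ncard_setOf_isTesler (h3q : 3 * q ≤ n) :
    2 ^ (q * q) ≤ {A | IsTesler (fun k : Fin n => (k : ℤ) + 1) A}.ncard :=
  two_pow_le_ncard_of_blockEmbed_add_diagonal_mem (finite_setOf_isTesler _) h3q
    (fun B k => ((k : ℤ) + 1 - hookSum B k).toNat) fun E =>
    isTesler_add_diagonal (blockTriangular_blockEmbed E) (hookSum_blockEmbed_le E)

end BlockEmbedding

theorem sq_div_le_log_and_log_le {n m : ℕ} (hn : 4 ≤ n) (hlow : 2 ^ (n / 3 * (n / 3)) ≤ m)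
    (hup : (m : ℝ) ≤ exp (3 * n ^ 2)) : (n : ℝ) ^ 2 / 54 ≤ log m ∧ log m ≤ 3 * n ^ 2 := by
  have hm : (0 : ℝ) < m := by exact_mod_cast (Nat.two_pow_pos _).trans_le hlow
  refine ⟨?_, (log_le_iff_le_exp hm).2 hup⟩
  have hq : (n : ℝ) ≤ 6 * (n / 3 : ℕ) := by exact_mod_cast (by omega : n ≤ 6 * (n / 3))
  have hlog2 : (2 : ℝ) / 3 ≤ log 2 := by linarith [log_two_gt_d9]
  calc (n : ℝ) ^ 2 / 54 ≤ ((n / 3 : ℕ) : ℝ) ^ 2 * (2 / 3) := by nlinarith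
    _ ≤ ((n / 3 : ℕ) : ℝ) ^ 2 * log 2 := by gcongr
    _ = log ((2 : ℝ) ^ (n / 3 * (n / 3))) := by rw [log_pow]; push_cast; ring
    _ ≤ log m := log_le_log (by positivity) (by exact_mod_cast hlow)

/-- `L(1,2,…,n) ≍ L[n²,n]`. -/
theorem L_onetoN_asymp_Lbox :
    ∃ a b : ℝ, 0 < a ∧ a ≤ b ∧ ∀ᶠ n : ℕ in atTop,
      a * Lbox (n ^ 2) n ≤ LTes (fun k : Fin n => ((k : ℕ) : ℤ) + 1) ∧
      LTes (fun k : Fin n => ((k : ℕ) : ℤ) + 1) ≤ b * Lbox (n ^ 2) n := by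
  refine ⟨1 / 162, 162, by norm_num, by norm_num, eventually_atTop.2 ⟨4, fun n hn => ?_⟩⟩
  have h3q : 3 * (n / 3) ≤ n := Nat.mul_div_le n 3
  obtain ⟨hK₁, hK₂⟩ := sq_div_le_log_and_log_le hn (two_pow_le_KPF h3q) (KPF_le_exp (by omega))
  obtain ⟨hT₁, hT₂⟩ := sq_div_le_log_and_log_le hn (two_pow_le_ncard_setOf_isTesler h3q)
    (ncard_setOf_isTesler_le_exp (by omega))
  rw [Lbox, LTes]
  constructor <;> linarith
end

section
/- Let h, w, k : ℤ⁺ → ℤ⁺ with k ≻ 1. If k ≼ h and h ≼ k·w², then L^k[h, w] ≍ w·√(h·k); that is, there exist constants 0 < a ≤ b with a·w(n)·√(h(n)·k(n)) ≤ L^{k(n)}[h(n), w(n)] ≤ b·w(n)·√(h(n)·k(n)) for all large n. -/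
open Filter

/-- `T^k[η]`: the maximal number of `k`-colorings of a Kostant picture of height `η`,
where a picture `c` has `∏_{i ≤ j} C(c i j + k - 1, k - 1)` colorings. -/
noncomputable def Tcol {w : ℕ} (k : ℕ) (η : Fin w → ℕ) : ℕ :=
  sSup ((fun c : Fin w → Fin w → ℕ =>
      ∏ i : Fin w, ∏ j : Fin w,
        (if i ≤ j then Nat.choose (c i j + k - 1) (k - 1) else 1)) ''
    {c : Fin w → Fin w → ℕ | IsKostant η c})

/-- `L^k[h,w] = ln T^k[(h,…,h)]` for the constant tuple of length `w`. -/
noncomputable def Lcol (k h w : ℕ) : ℝ := Real.log (Tcol k (fun _ : Fin w => h))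

/-!
Upper bound. For `λ > 0` a single term of the binomial expansion of `(e^{-λ} + (1 - e^{-λ}))^{c+r}`
gives `C(c + r, r) ≤ e^{λ c} (1 - e^{-λ})^{-r}`. Take `λ = μ L` for the loops of length `L`:
since `∑ c_{ij} (j - i + 1) = w h`, the first factors multiply to `e^{μ w h}`, while
`-log (1 - e^{-λ}) ≤ log⁺ λ⁻¹ + e^{1 - λ}` summed over `L ≥ 1` is at most `(1 + e) / μ`
(by `M^M / M! ≤ e^M` for the first part and a geometric series for the second). Hence
`L^k[h,w] ≤ μ w h + (1 + e) k w / μ`, and `μ = √(k/h)` gives `(2 + e) w √(h k)`.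

Lower bound. Put `t` copies of every loop of length at most `l` and fill up with loops of length
one: this is a picture as soon as `t l² ≤ h`, it has at least `l (w + 1 - l)` loop types each
carrying `t` loops, and `C(t + k - 1, k - 1) ≥ 2^{min (t, k - 1)}`. If `h < k`, take `l = 1` and
`t = h`, and use `k ≼ h`. Otherwise take `t = k` and `l = min (⌊√(h/k)⌋, ⌈w/2⌉)`: either
`l k ≍ √(h k)` directly, or `l ≍ w` and `h ≼ k w²` gives `w k ≽ √(h k)`.
-/

open Real Finset
open scoped Nat

theorem choose_mul_pow_mul_one_sub_pow_le_one {x : ℝ} (hx₀ : 0 ≤ x) (hx₁ : x ≤ 1) (m r : ℕ) :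
    ((m + r).choose m : ℝ) * x ^ m * (1 - x) ^ r ≤ 1 := by
  have hterm := single_le_sum (f := fun i => x ^ i * (1 - x) ^ (m + r - i) * ((m + r).choose i : ℝ))
    (fun i _ => by have := sub_nonneg.2 hx₁; positivity) (mem_range.2 (by omega : m < m + r + 1))
  rw [← add_pow, add_sub_cancel, one_pow, Nat.add_sub_cancel_left] at hterm
  linarith

theorem log_choose_add_le (c r : ℕ) {t : ℝ} (ht : 0 < t) :
    log ((c + r).choose r) ≤ t * c + r * -log (1 - exp (-t)) := by
  have hx₁ : exp (-t) < 1 := exp_lt_one_iff.2 (by linarith)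
  have hpos : (0 : ℝ) < (c + r).choose c := by exact_mod_cast Nat.choose_pos (by omega)
  have h := log_le_log (by have := sub_pos.2 hx₁; positivity)
    (choose_mul_pow_mul_one_sub_pow_le_one (exp_pos _).le hx₁.le c r)
  rw [log_one, log_mul (by positivity) (by have := sub_pos.2 hx₁; positivity),
    log_mul hpos.ne' (by positivity), log_pow, log_pow, log_exp] at h
  rw [Nat.choose_symm_add] at h
  linarith

theorem neg_log_one_sub_exp_neg_le {t : ℝ} (ht : 0 < t) :
    -log (1 - exp (-t)) ≤ log⁺ t⁻¹ + exp (1 - t) := by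
  rcases le_or_gt t 1 with ht1 | ht1
  · -- `1 - e^{-t} ≥ t e^{-t}` is `e^t ≥ 1 + t`
    have hlow : t * exp (-t) ≤ 1 - exp (-t) := by
      have := mul_le_mul_of_nonneg_right (add_one_le_exp t) (exp_pos (-t)).le
      rw [← exp_add, add_neg_cancel, exp_zero] at this
      linarith
    have h := log_le_log (by positivity) hlow
    rw [log_mul ht.ne' (exp_pos _).ne', log_exp] at h
    have h1 : (1 : ℝ) ≤ exp (1 - t) := one_le_exp (by linarith)
    have h2 : log t⁻¹ ≤ log⁺ t⁻¹ := le_max_right _ _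
    rw [log_inv] at h2
    linarith
  · -- `-log (1 - y) ≤ y / (1 - y) ≤ e y` for `y = e^{-t} ≤ e^{-1}`
    set y := exp (-t) with hy
    have hy1 : y < 1 := exp_lt_one_iff.2 (by linarith)
    have hey : exp (1 - t) = exp 1 * y := by rw [hy, ← exp_add]; ring_nf
    have hey1 : exp 1 * y ≤ 1 := by rw [← hey]; exact exp_le_one_iff.2 (by linarith)
    have he : (2 : ℝ) ≤ exp 1 := by linarith [add_one_le_exp (1 : ℝ)]
    have h := one_sub_inv_le_log_of_pos (sub_pos.2 hy1)
    have hinv : (1 - y)⁻¹ ≤ 1 + exp 1 * y := by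
      rw [inv_le_iff_one_le_mul₀ (sub_pos.2 hy1)]
      nlinarith [(exp_pos (-t)).le]
    have := posLog_nonneg (x := t⁻¹)
    linarith

theorem sum_range_log_div_le {x : ℝ} (hx : 0 < x) (M : ℕ) :
    ∑ d ∈ range M, log (x / (d + 1)) ≤ x := by
  rcases M.eq_zero_or_pos with rfl | hM
  · simpa using hx.le
  have hM' : (0 : ℝ) < M := by exact_mod_cast hM
  have hfac : ∑ d ∈ range M, log ((d : ℝ) + 1) = log M ! := by
    rw [← log_prod (fun d _ => by positivity), ← prod_range_add_one_eq_factorial]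
    push_cast
    rfl
  have hstir : M * log M - log M ! ≤ M := by
    have h := log_le_log (by positivity) (pow_div_factorial_le_exp (M : ℝ) hM'.le M)
    rwa [log_div (by positivity) (by positivity), log_pow, log_exp] at h
  have hlog := log_le_sub_one_of_pos (div_pos hx hM')
  rw [log_div hx.ne' hM'.ne'] at hlog
  calc ∑ d ∈ range M, log (x / (d + 1))
      = M * log x - log M ! := by
        rw [sum_congr rfl fun d _ => log_div hx.ne' (by positivity), sum_sub_distrib, hfac,
          sum_const, card_range, nsmul_eq_mul]
    _ ≤ M * (log x - log M) + M := by linarith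
    _ ≤ M * (x / M - 1) + M := by gcongr
    _ = x := by field_simp; ring

theorem sum_range_posLog_div_le {x : ℝ} (hx : 0 < x) (n : ℕ) :
    ∑ d ∈ range n, log⁺ (x / (d + 1)) ≤ x := by
  set M := min n ⌊x⌋₊
  have hsub : ∑ d ∈ range M, log⁺ (x / (d + 1)) = ∑ d ∈ range n, log⁺ (x / (d + 1)) := by
    refine sum_subset (range_subset_range.2 (min_le_left _ _)) fun d hdn hdM => ?_
    have hxd : x < d + 1 := by
      have : ⌊x⌋₊ ≤ d := by simp only [mem_range, M] at hdn hdM; omega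
      exact (Nat.lt_floor_add_one x).trans_le (by exact_mod_cast Nat.add_le_add_right this 1)
    rw [posLog_eq_zero_iff, abs_of_pos (by positivity), div_le_one (by positivity)]
    exact hxd.le
  rw [← hsub]
  refine le_trans (le_of_eq (sum_congr rfl fun d hd => ?_)) (sum_range_log_div_le hx M)
  have hdx : (d : ℝ) + 1 ≤ x := by
    have : d + 1 ≤ ⌊x⌋₊ := by simp only [mem_range, M] at hd; omega
    exact_mod_cast (Nat.le_floor_iff hx.le).1 this
  rw [posLog_eq_log (by rw [abs_of_pos (by positivity), le_div_iff₀ (by positivity)]; linarith)]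

theorem sum_range_exp_neg_mul_le {μ : ℝ} (hμ : 0 < μ) (n : ℕ) :
    ∑ d ∈ range n, exp (-(μ * (d + 1))) ≤ μ⁻¹ := by
  set r := exp (-μ)
  have hr1 : r < 1 := exp_lt_one_iff.2 (by linarith)
  have hterm : ∀ d : ℕ, exp (-(μ * (d + 1))) = r * r ^ d := fun d => by
    rw [← exp_nat_mul, ← exp_add]; ring_nf
  have hgeom : ∑ d ∈ range n, r ^ d ≤ (1 - r)⁻¹ := by
    have := geom_sum_Ico_le_of_lt_one (m := 0) (n := n) (exp_pos (-μ)).le hr1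
    rwa [← range_eq_Ico, pow_zero, one_div] at this
  -- `r / (1 - r) = 1 / (e^μ - 1) ≤ 1 / μ`
  have hrμ : r * (1 + μ) ≤ 1 := by
    have := mul_le_mul_of_nonneg_left (add_one_le_exp μ) (exp_pos (-μ)).le
    rwa [← exp_add, neg_add_cancel, exp_zero, add_comm] at this
  simp_rw [hterm, ← mul_sum]
  calc r * ∑ d ∈ range n, r ^ d ≤ r * (1 - r)⁻¹ := by gcongr
    _ ≤ μ⁻¹ := by
      rw [← div_eq_mul_inv, div_le_iff₀ (sub_pos.2 hr1)]
      field_simp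
      linarith

theorem sum_range_posLog_add_exp_le {μ : ℝ} (hμ : 0 < μ) (n : ℕ) :
    ∑ d ∈ range n, (log⁺ (μ * (d + 1))⁻¹ + exp (1 - μ * (d + 1))) ≤ (1 + exp 1) / μ := by
  have h₁ := sum_range_posLog_div_le (inv_pos.2 hμ) n
  have h₂ := sum_range_exp_neg_mul_le hμ n
  have hexp : ∀ d : ℕ, exp (1 - μ * (d + 1)) = exp 1 * exp (-(μ * (d + 1))) := fun d => by
    rw [← exp_add]; ring_nf
  have hinv : ∀ d : ℕ, (μ * (d + 1))⁻¹ = μ⁻¹ / (d + 1) := fun d => by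
    rw [mul_inv, div_eq_mul_inv]
  simp_rw [sum_add_distrib, hexp, hinv, ← mul_sum]
  calc _ ≤ μ⁻¹ + exp 1 * μ⁻¹ := by gcongr
    _ = (1 + exp 1) / μ := by ring

theorem choose_add_sub_one (c k : ℕ) :
    (c + k - 1).choose (k - 1) = (c + (k - 1)).choose (k - 1) := by
  cases k <;> simp

theorem log_choose_add_sub_one_le (c k : ℕ) {t : ℝ} (ht : 0 < t) :
    log ((c + k - 1).choose (k - 1)) ≤ t * c + k * (log⁺ t⁻¹ + exp (1 - t)) := by
  have hk : ((k - 1 : ℕ) : ℝ) ≤ k := by exact_mod_cast Nat.sub_le k 1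
  rw [choose_add_sub_one]
  refine (log_choose_add_le c (k - 1) ht).trans (add_le_add_right ?_ _)
  exact (mul_le_mul_of_nonneg_left (neg_log_one_sub_exp_neg_le ht) (Nat.cast_nonneg _)).trans
    (mul_le_mul_of_nonneg_right hk (add_nonneg posLog_nonneg (exp_pos _).le))

theorem two_pow_le_choose_add {a b : ℕ} (hab : a ≤ b) : 2 ^ a ≤ (a + b).choose a := by
  induction a with
  | zero => simp
  | succ a ih =>
    have ih := ih (by omega)
    -- `(a + 1) C(a + b + 1, a + 1) = (a + b + 1) C(a + b, a)` and `a + b + 1 ≥ 2 (a + 1)`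
    have key := Nat.add_one_mul_choose_eq (a + b) a
    have hstep : 2 * (a + 1) * 2 ^ a ≤ (a + b + 1).choose (a + 1) * (a + 1) := by
      rw [← key]
      exact Nat.mul_le_mul (by omega) ih
    rw [show a + 1 + b = a + b + 1 by ring, pow_succ]
    nlinarith

theorem two_pow_min_le_choose_add (a b : ℕ) : 2 ^ min a b ≤ (a + b).choose b := by
  rcases le_total a b with h | h
  · rw [min_eq_left h, ← Nat.choose_symm_add]
    exact two_pow_le_choose_add h
  · rw [min_eq_right h, add_comm]
    exact two_pow_le_choose_add h

theorem mul_sqrt_div_sq_le (h k : ℕ) : k * Nat.sqrt (h / k) ^ 2 ≤ h :=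
  calc k * Nat.sqrt (h / k) ^ 2 ≤ k * (h / k) :=
        Nat.mul_le_mul_left _ (by rw [sq]; exact Nat.sqrt_le _)
    _ ≤ h := Nat.mul_div_le h k

theorem le_mul_two_mul_sqrt_div_sq {h k : ℕ} (hk : 0 < k) (hkh : k ≤ h) :
    h ≤ k * (2 * Nat.sqrt (h / k)) ^ 2 := by
  have hs : 1 ≤ Nat.sqrt (h / k) :=
    Nat.le_sqrt.2 ((Nat.le_div_iff_mul_le hk).2 (by simpa using hkh))
  have h₁ : h < k * (h / k + 1) := Nat.lt_mul_div_succ h hk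
  have h₂ : h / k + 1 ≤ (Nat.sqrt (h / k) + 1) ^ 2 := by rw [sq]; exact Nat.lt_succ_sqrt _
  have h₃ : (Nat.sqrt (h / k) + 1) ^ 2 ≤ (2 * Nat.sqrt (h / k)) ^ 2 :=
    Nat.pow_le_pow_left (by omega) 2
  exact h₁.le.trans (Nat.mul_le_mul_left _ (h₂.trans h₃))

namespace Kostant

variable {w : ℕ}

def height (c : Fin w → Fin w → ℕ) (m : Fin w) : ℕ :=
  ∑ i, ∑ j, if i ≤ m ∧ m ≤ j then c i j else 0

theorem le_height (c : Fin w → Fin w → ℕ) {i m j : Fin w} (him : i ≤ m) (hmj : m ≤ j) :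
    c i j ≤ height c m := by
  calc c i j = if i ≤ m ∧ m ≤ j then c i j else 0 := (if_pos ⟨him, hmj⟩).symm
    _ ≤ ∑ j', if i ≤ m ∧ m ≤ j' then c i j' else 0 :=
      single_le_sum (f := fun j' => if i ≤ m ∧ m ≤ j' then c i j' else 0)
        (fun _ _ => Nat.zero_le _) (mem_univ j)
    _ ≤ height c m :=
      single_le_sum (f := fun i' => ∑ j', if i' ≤ m ∧ m ≤ j' then c i' j' else 0)
        (fun _ _ => Nat.zero_le _) (mem_univ i)

theorem height_add (c d : Fin w → Fin w → ℕ) (m : Fin w) :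
    height (c + d) m = height c m + height d m := by
  simp only [height, Pi.add_apply, ← sum_add_distrib, ite_add_ite, add_zero]

def diag (f : Fin w → ℕ) : Fin w → Fin w → ℕ := fun i j => if i = j then f i else 0

theorem height_diag (f : Fin w → ℕ) (m : Fin w) : height (diag f) m = f m := by
  have h : ∀ i j : Fin w, (if i ≤ m ∧ m ≤ j then diag f i j else 0) =
      if i = j then (if i = m then f i else 0) else 0 := by
    intro i j
    by_cases hij : i = j
    · subst hij
      simp [diag, ← le_antisymm_iff, eq_comm]
    · simp [diag, hij]
  simp only [height, h, sum_ite_eq, mem_univ, if_true, sum_ite_eq']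

theorem isKostant_add_diag {η : Fin w → ℕ} {c : Fin w → Fin w → ℕ}
    (hc : ∀ i j, j < i → c i j = 0) (hle : ∀ m, height c m ≤ η m) :
    IsKostant η (c + diag fun m => η m - height c m) := by
  refine ⟨fun i j hji => ?_, fun m => ?_⟩
  · simp [diag, hc i j hji, hji.ne']
  · change height _ m = η m
    rw [height_add, height_diag]
    have := hle m
    omega

theorem finite_setOf_isKostant (η : Fin w → ℕ) : {c | IsKostant η c}.Finite := by
  refine (Set.Finite.pi fun i => Set.Finite.pi fun _ => Set.finite_Iic (η i)).subset ?_
  rintro c ⟨hlow, hheight⟩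
  simp only [Set.mem_pi, Set.mem_univ, Set.mem_Iic, forall_const]
  intro i j
  rcases lt_or_ge j i with hji | hij
  · simp [hlow i j hji]
  · exact hheight i ▸ le_height c le_rfl hij

def numColorings (k : ℕ) (c : Fin w → Fin w → ℕ) : ℕ :=
  ∏ i, ∏ j, if i ≤ j then (c i j + k - 1).choose (k - 1) else 1

theorem exists_isKostant_numColorings_eq_Tcol (k : ℕ) (η : Fin w → ℕ) :
    ∃ c, IsKostant η c ∧ numColorings k c = Tcol k η :=
  Nat.sSup_mem (s := numColorings k '' {c | IsKostant η c})
    ⟨_, _, isKostant_add_diag (c := 0) (fun _ _ _ => rfl) (by simp [height]), rfl⟩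
    ((finite_setOf_isKostant η).image _).bddAbove

theorem numColorings_le_Tcol (k : ℕ) {η : Fin w → ℕ} {c : Fin w → Fin w → ℕ}
    (hc : IsKostant η c) : numColorings k c ≤ Tcol k η :=
  le_csSup ((finite_setOf_isKostant η).image _).bddAbove ⟨c, hc, rfl⟩

theorem log_numColorings (k : ℕ) (c : Fin w → Fin w → ℕ) :
    log (numColorings k c) =
      ∑ i, ∑ j, if i ≤ j then log ((c i j + k - 1).choose (k - 1)) else 0 := by
  have hpos : ∀ i j, (0 : ℝ) < if i ≤ j then ((c i j + k - 1).choose (k - 1) : ℝ) else 1 := by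
    intro i j
    split_ifs
    · exact_mod_cast Nat.choose_pos (by omega)
    · exact one_pos
  simp only [numColorings, Nat.cast_prod, Nat.cast_ite, Nat.cast_one]
  rw [log_prod fun i _ => (prod_pos fun j _ => hpos i j).ne']
  refine sum_congr rfl fun i _ => ?_
  rw [log_prod fun j _ => (hpos i j).ne']
  exact sum_congr rfl fun j _ => by split_ifs <;> simp

theorem sum_mul_length_eq_sum_height (c : Fin w → Fin w → ℕ) :
    ∑ i, ∑ j, c i j * ((j : ℕ) + 1 - i) = ∑ m, height c m := by
  symm
  calc ∑ m, height c m = ∑ i, ∑ m, ∑ j, if i ≤ m ∧ m ≤ j then c i j else 0 := sum_comm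
    _ = ∑ i, ∑ j, ∑ m, if i ≤ m ∧ m ≤ j then c i j else 0 := sum_congr rfl fun _ _ => sum_comm
    _ = _ := by
      refine sum_congr rfl fun i _ => sum_congr rfl fun j _ => ?_
      have hIcc : (univ.filter fun m => i ≤ m ∧ m ≤ j) = Icc i j := by ext; simp
      rw [sum_ite, sum_const_zero, add_zero, sum_const, hIcc, Fin.card_Icc, smul_eq_mul, mul_comm]

theorem sum_ite_le_sum_range {f : ℕ → ℝ} (hf : ∀ d, 0 ≤ f d) (i : Fin w) :
    ∑ j : Fin w, (if i ≤ j then f ((j : ℕ) + 1 - i) else 0) ≤ ∑ d ∈ range w, f (d + 1) := by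
  simp only [Fin.le_def]
  rw [Fin.sum_univ_eq_sum_range (fun j => if (i : ℕ) ≤ j then f (j + 1 - i) else 0), ← sum_filter]
  have hIco : (range w).filter (fun j => (i : ℕ) ≤ j) = Ico (i : ℕ) w := by
    ext; simp [and_comm]
  rw [hIco, sum_Ico_eq_sum_range]
  calc ∑ d ∈ range (w - i), f (i + d + 1 - i) = ∑ d ∈ range (w - i), f (d + 1) :=
        sum_congr rfl fun d _ => by congr 1; omega
    _ ≤ ∑ d ∈ range w, f (d + 1) :=
        sum_le_sum_of_subset_of_nonneg (range_subset_range.2 (Nat.sub_le _ _)) fun _ _ _ => hf _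

theorem log_Tcol_le (k : ℕ) (η : Fin w → ℕ) {μ : ℝ} (hμ : 0 < μ) :
    log (Tcol k η) ≤ μ * ∑ m, (η m : ℝ) + k * w * ((1 + exp 1) / μ) := by
  obtain ⟨c, hc, hcT⟩ := exists_isKostant_numColorings_eq_Tcol k η
  set ψ : ℕ → ℝ := fun L => log⁺ (μ * L)⁻¹ + exp (1 - μ * L) with hψ
  have hψ₀ : ∀ L, 0 ≤ ψ L := fun L => add_nonneg posLog_nonneg (exp_pos _).le
  have hloop : ∀ i j : Fin w, (if i ≤ j then log ((c i j + k - 1).choose (k - 1) : ℝ) else 0) ≤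
      μ * (c i j * ((j : ℕ) + 1 - i) : ℕ) + k * (if i ≤ j then ψ ((j : ℕ) + 1 - i) else 0) := by
    intro i j
    split_ifs with hij
    · set L := (j : ℕ) + 1 - i
      have hL : (0 : ℝ) < L := by
        have := Fin.le_def.1 hij
        exact_mod_cast (by omega : 0 < L)
      calc _ ≤ μ * L * c i j + k * ψ L := log_choose_add_sub_one_le _ _ (by positivity)
        _ = μ * (c i j * L : ℕ) + k * ψ L := by push_cast; ring
    · simp only [mul_zero, add_zero]
      positivity
  have hheight : ∑ i, ∑ j, ((c i j * ((j : ℕ) + 1 - i) : ℕ) : ℝ) = ∑ m, (η m : ℝ) := by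
    have h := congrArg (Nat.cast : ℕ → ℝ) (sum_mul_length_eq_sum_height c)
    simp only [Nat.cast_sum] at h
    rw [h]
    exact sum_congr rfl fun m _ => congrArg _ (hc.2 m)
  have hweights : ∑ i : Fin w, ∑ j : Fin w, (if i ≤ j then ψ ((j : ℕ) + 1 - i) else 0) ≤
      w * ((1 + exp 1) / μ) := by
    calc _ ≤ ∑ _i : Fin w, ∑ d ∈ range w, ψ (d + 1) :=
          sum_le_sum fun i _ => sum_ite_le_sum_range hψ₀ i
      _ ≤ ∑ _i : Fin w, (1 + exp 1) / μ := by
          refine sum_le_sum fun _ _ => ?_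
          simpa [hψ] using sum_range_posLog_add_exp_le hμ w
      _ = w * ((1 + exp 1) / μ) := by simp
  rw [← hcT, log_numColorings]
  calc _ ≤ ∑ i, ∑ j, (μ * ((c i j * ((j : ℕ) + 1 - i) : ℕ) : ℝ) +
          k * (if i ≤ j then ψ ((j : ℕ) + 1 - i) else 0)) :=
        sum_le_sum fun i _ => sum_le_sum fun j _ => hloop i j
    _ = μ * ∑ m, (η m : ℝ) +
          k * ∑ i : Fin w, ∑ j : Fin w, (if i ≤ j then ψ ((j : ℕ) + 1 - i) else 0) := by
        simp only [sum_add_distrib, ← mul_sum, hheight]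
    _ ≤ μ * ∑ m, (η m : ℝ) + k * w * ((1 + exp 1) / μ) := by
        rw [mul_assoc]
        gcongr

theorem Lcol_le {k h : ℕ} (hk : 0 < k) (hh : 0 < h) (w : ℕ) :
    Lcol k h w ≤ (2 + exp 1) * (w * √(h * k)) := by
  have hh' : (0 : ℝ) < √h := sqrt_pos.2 (by exact_mod_cast hh)
  have hk' : (0 : ℝ) < √k := sqrt_pos.2 (by exact_mod_cast hk)
  have h₁ := log_Tcol_le k (fun _ : Fin w => h) (div_pos hk' hh')
  rw [sum_const, card_univ, Fintype.card_fin, nsmul_eq_mul] at h₁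
  calc Lcol k h w ≤ √k / √h * (w * h) + k * w * ((1 + exp 1) / (√k / √h)) := h₁
    _ = (2 + exp 1) * (w * (√h * √k)) := by
        nth_rw 2 [← sq_sqrt (Nat.cast_nonneg h)]
        nth_rw 2 [← sq_sqrt (Nat.cast_nonneg k)]
        field_simp
        ring
    _ = (2 + exp 1) * (w * √(h * k)) := by rw [sqrt_mul (Nat.cast_nonneg _)]

def window (l t : ℕ) : Fin w → Fin w → ℕ :=
  fun i j => if (i : ℕ) ≤ j ∧ (j : ℕ) < i + l then t else 0

theorem card_filter_val_mem_le (s : Finset ℕ) : #{i : Fin w | (i : ℕ) ∈ s} ≤ #s :=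
  card_le_card_of_injOn Fin.val (fun _ hi => (mem_filter.1 hi).2) Fin.val_injective.injOn

-- a window loop covering `m` starts in `(m - l, m]` and ends in `[m, m + l)`
theorem height_window_le (l t : ℕ) (m : Fin w) : height (window l t) m ≤ t * l ^ 2 := by
  set s₁ := Ico ((m : ℕ) + 1 - l) (m + 1)
  set s₂ := Ico (m : ℕ) (m + l)
  have hterm : ∀ i j : Fin w, (if i ≤ m ∧ m ≤ j then window l t i j else 0) ≤
      t * ((if (i : ℕ) ∈ s₁ then 1 else 0) * (if (j : ℕ) ∈ s₂ then 1 else 0)) := by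
    intro i j
    simp only [window, s₁, s₂, mem_Ico, Fin.le_def]
    split_ifs <;> omega
  calc height (window l t) m
      ≤ ∑ i : Fin w, ∑ j : Fin w,
          t * ((if (i : ℕ) ∈ s₁ then 1 else 0) * (if (j : ℕ) ∈ s₂ then 1 else 0)) :=
        sum_le_sum fun i _ => sum_le_sum fun j _ => hterm i j
    _ = t * (#{i : Fin w | (i : ℕ) ∈ s₁} * #{j : Fin w | (j : ℕ) ∈ s₂}) := by
        simp only [← mul_sum, ← sum_mul, sum_boole, Nat.cast_id]
    _ ≤ t * (#s₁ * #s₂) := by gcongr <;> exact card_filter_val_mem_le _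
    _ ≤ t * l ^ 2 := by
        simp only [s₁, s₂, Nat.card_Ico]
        rw [sq]
        gcongr <;> omega

theorem mul_le_count_short_loops (l : ℕ) :
    l * (w + 1 - l) ≤ ∑ i : Fin w, ∑ j : Fin w, if (i : ℕ) ≤ j ∧ (j : ℕ) < i + l then 1 else 0 := by
  rcases l.eq_zero_or_pos with rfl | hl
  · simp
  have hrow : ∀ i : ℕ, i + l ≤ w →
      l ≤ ∑ j : Fin w, if i ≤ (j : ℕ) ∧ (j : ℕ) < i + l then 1 else 0 := by
    intro i hi
    rw [Fin.sum_univ_eq_sum_range (fun j => if i ≤ j ∧ j < i + l then 1 else 0), sum_boole]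
    calc l = #(Ico i (i + l)) := by simp
      _ ≤ _ := card_le_card fun j hj => by simp only [mem_Ico, mem_filter, mem_range] at hj ⊢; omega
  rw [Fin.sum_univ_eq_sum_range
    (fun i => ∑ j : Fin w, if i ≤ (j : ℕ) ∧ (j : ℕ) < i + l then 1 else 0)]
  calc l * (w + 1 - l) = ∑ _i ∈ range (w + 1 - l), l := by simp [mul_comm]
    _ ≤ ∑ i ∈ range (w + 1 - l), ∑ j : Fin w, if i ≤ (j : ℕ) ∧ (j : ℕ) < i + l then 1 else 0 :=
        sum_le_sum fun i hi => hrow i (by simp only [mem_range] at hi; omega)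
    _ ≤ _ := sum_le_sum_of_subset (range_subset_range.2 (by omega))

theorem mul_log_two_le_log_Tcol (k : ℕ) {η : Fin w → ℕ} {l t : ℕ} (ht : ∀ m, t * l ^ 2 ≤ η m) :
    ((l * (w + 1 - l) * min t (k - 1) : ℕ) : ℝ) * log 2 ≤ log (Tcol k η) := by
  have hwin : ∀ i j : Fin w, j < i → window l t i j = 0 := fun i j hji => by
    simp only [window, Fin.lt_def] at hji ⊢
    exact if_neg (by omega)
  have hc := isKostant_add_diag hwin fun m => (height_window_le l t m).trans (ht m)
  set c := window l t + diag fun m => η m - height (window l t) m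
  set a := log ((t + k - 1).choose (k - 1) : ℝ)
  have ha : (min t (k - 1) : ℕ) * log 2 ≤ a := by
    rw [← log_pow]
    refine log_le_log (by positivity) ?_
    have := two_pow_min_le_choose_add t (k - 1)
    rw [← choose_add_sub_one] at this
    exact_mod_cast this
  have hterm : ∀ i j : Fin w,
      (if (i : ℕ) ≤ j ∧ (j : ℕ) < i + l then (1 : ℝ) else 0) * a ≤
        if i ≤ j then log ((c i j + k - 1).choose (k - 1) : ℝ) else 0 := by
    intro i j
    split_ifs with hshort hij hij
    · have : t ≤ c i j := by simp [c, window, hshort, Pi.add_apply]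
      simp only [one_mul, a]
      gcongr
      exact_mod_cast Nat.choose_pos (by omega)
    · exact absurd (Fin.le_def.2 hshort.1) hij
    · simpa using log_natCast_nonneg _
    · simp
  calc ((l * (w + 1 - l) * min t (k - 1) : ℕ) : ℝ) * log 2
      = (l * (w + 1 - l) : ℕ) * ((min t (k - 1) : ℕ) * log 2) := by push_cast; ring
    _ ≤ (∑ i : Fin w, ∑ j : Fin w, if (i : ℕ) ≤ j ∧ (j : ℕ) < i + l then 1 else 0 : ℕ) * a := by
        gcongr
        exact mul_le_count_short_loops l
    _ ≤ log (numColorings k c) := by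
        rw [log_numColorings]
        push_cast
        rw [sum_mul]
        exact sum_le_sum fun i _ => (sum_mul ..).trans_le (sum_le_sum fun j _ => hterm i j)
    _ ≤ log (Tcol k η) := by
        refine log_le_log ?_ (by exact_mod_cast numColorings_le_Tcol k hc)
        exact_mod_cast prod_pos fun i _ => prod_pos fun j _ => by
          split_ifs
          · exact Nat.choose_pos (by omega)
          · exact one_pos

theorem Lcol_ge_of_lt {k h : ℕ} (w : ℕ) {D : ℝ} (hD : 1 ≤ D) (hhk : h < k)
    (hkh : (k : ℝ) ≤ D * h) :
    log 2 / (8 * √D) * (w * √(h * k)) ≤ Lcol k h w := by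
  have hmain := mul_log_two_le_log_Tcol k (w := w) (η := fun _ => h) (l := 1) (t := h)
    fun _ => by simp
  rw [min_eq_left (by omega)] at hmain
  have hS : √(h * k) ≤ √D * h := by
    rw [sqrt_le_left (by positivity), mul_pow, sq_sqrt (by linarith)]
    nlinarith [(Nat.cast_nonneg h : (0 : ℝ) ≤ h)]
  have hsD : 1 ≤ √D := one_le_sqrt.2 hD
  calc log 2 / (8 * √D) * (w * √(h * k)) ≤ log 2 / (8 * √D) * (w * (√D * h)) := by gcongr
    _ ≤ ((1 * (w + 1 - 1) * h : ℕ) : ℝ) * log 2 := by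
      simp only [one_mul, Nat.add_sub_cancel, Nat.cast_mul]
      field_simp
      nlinarith [(Nat.cast_nonneg (w * h) : (0 : ℝ) ≤ (w * h : ℕ)), log_pos one_lt_two]
    _ ≤ Lcol k h w := hmain

theorem Lcol_ge_of_le {k h w : ℕ} {D : ℝ} (hk : 2 ≤ k) (hD : 1 ≤ D) (hkh : k ≤ h)
    (hhw : (h : ℝ) ≤ D * (k * w ^ 2)) :
    log 2 / (8 * √D) * (w * √(h * k)) ≤ Lcol k h w := by
  set s := Nat.sqrt (h / k)
  set l := min s ((w + 1) / 2)
  have hmain := mul_log_two_le_log_Tcol k (w := w) (η := fun _ => h) (l := l) (t := k)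
    fun _ => (Nat.mul_le_mul_left _ (Nat.pow_le_pow_left (min_le_left _ _) 2)).trans
      (mul_sqrt_div_sq_le h k)
  rw [min_eq_right (by omega)] at hmain
  have hhl : (h : ℝ) ≤ D * (k * (2 * l) ^ 2) := by
    rcases min_choice s ((w + 1) / 2) with hl | hl <;> rw [show l = _ from hl]
    · have : (h : ℝ) ≤ k * (2 * s) ^ 2 := by
        exact_mod_cast le_mul_two_mul_sqrt_div_sq (by omega) hkh
      nlinarith [(by positivity : (0 : ℝ) ≤ k * (2 * s) ^ 2)]
    · have hw : (w : ℝ) ≤ 2 * ((w + 1) / 2 : ℕ) := by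
        exact_mod_cast (by omega : w ≤ 2 * ((w + 1) / 2))
      calc (h : ℝ) ≤ D * (k * w ^ 2) := hhw
        _ ≤ D * (k * (2 * ((w + 1) / 2 : ℕ)) ^ 2) := by gcongr
  have hS : √(h * k) ≤ 2 * √D * (l * k) := by
    rw [sqrt_le_left (by positivity), mul_pow, mul_pow, sq_sqrt (by linarith)]
    nlinarith [(Nat.cast_nonneg k : (0 : ℝ) ≤ k)]
  have hcount : l * w * k ≤ l * (w + 1 - l) * (k - 1) * 4 := by
    have := Nat.mul_le_mul (show w ≤ 2 * (w + 1 - l) by omega) (show k ≤ 2 * (k - 1) by omega)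
    calc l * w * k = l * (w * k) := by ring
      _ ≤ l * (2 * (w + 1 - l) * (2 * (k - 1))) := Nat.mul_le_mul_left _ this
      _ = l * (w + 1 - l) * (k - 1) * 4 := by ring
  have hsD : 1 ≤ √D := one_le_sqrt.2 hD
  calc log 2 / (8 * √D) * (w * √(h * k)) ≤ log 2 / (8 * √D) * (w * (2 * √D * (l * k))) := by
        gcongr
    _ = ((l * w * k : ℕ) : ℝ) / 4 * log 2 := by push_cast; field_simp; ring
    _ ≤ ((l * (w + 1 - l) * (k - 1) : ℕ) : ℝ) * log 2 := by
        gcongr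
        rw [div_le_iff₀ (by norm_num)]
        exact_mod_cast hcount
    _ ≤ Lcol k h w := hmain

end Kostant

theorem Lcol_asymp_mid_general (h w k : ℕ → ℕ)
    (hh : ∀ n, 0 < h n) (hk : ∀ n, 0 < k n)
    (hk1 : Tendsto (fun n => (1 : ℝ) / k n) atTop (nhds 0))
    (hkh : ∃ c : ℝ, 0 < c ∧ ∀ᶠ n : ℕ in atTop, (k n : ℝ) ≤ c * (h n : ℝ))
    (hhkw : ∃ c : ℝ, 0 < c ∧ ∀ᶠ n : ℕ in atTop,
      (h n : ℝ) ≤ c * ((k n : ℝ) * (w n : ℝ) ^ 2)) :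
    ∃ a b : ℝ, 0 < a ∧ a ≤ b ∧ ∀ᶠ n : ℕ in atTop,
      a * ((w n : ℝ) * Real.sqrt ((h n : ℝ) * (k n : ℝ))) ≤ Lcol (k n) (h n) (w n) ∧
      Lcol (k n) (h n) (w n) ≤ b * ((w n : ℝ) * Real.sqrt ((h n : ℝ) * (k n : ℝ))) := by
  obtain ⟨C₁, -, hC₁⟩ := hkh
  obtain ⟨C₂, -, hC₂⟩ := hhkw
  set D := max (max C₁ C₂) 1
  have hk2 : ∀ᶠ n in atTop, 2 ≤ k n := by
    filter_upwards [hk1.eventually (gt_mem_nhds (by norm_num : (0 : ℝ) < 1 / 2))] with n hn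
    have hkn : (0 : ℝ) < k n := by exact_mod_cast hk n
    rw [div_lt_div_iff₀ hkn two_pos] at hn
    exact_mod_cast (by linarith : (2 : ℝ) ≤ k n)
  have hlog2 : 0 < log 2 := log_pos one_lt_two
  have hsD : 1 ≤ √D := one_le_sqrt.2 (le_max_right _ _)
  refine ⟨log 2 / (8 * √D), 2 + exp 1, by positivity, ?_, ?_⟩
  · calc log 2 / (8 * √D) ≤ log 2 := div_le_self hlog2.le (by linarith)
      _ ≤ 2 + exp 1 := by linarith [log_two_lt_d9, exp_pos 1]
  filter_upwards [hC₁, hC₂, hk2] with n h₁ h₂ h₃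
  have hC₁D : C₁ ≤ D := (le_max_left _ _).trans (le_max_left _ _)
  have hC₂D : C₂ ≤ D := (le_max_right _ _).trans (le_max_left _ _)
  have hD : 1 ≤ D := le_max_right _ _
  refine ⟨?_, Kostant.Lcol_le (hk n) (hh n) _⟩
  rcases lt_or_ge (h n) (k n) with hhk | hkh
  · exact Kostant.Lcol_ge_of_lt _ hD hhk (h₁.trans (by gcongr))
  · exact Kostant.Lcol_ge_of_le h₃ hD hkh (h₂.trans (by gcongr))

/-- If `k ≻ 1`, `k ≼ h` and `h ≼ k·w²`, then `L^k[h,w] ≍ w·√(h·k)`. -/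
theorem Lcol_asymp_mid (h w k : ℕ → ℕ)
    (hh : ∀ n, 0 < h n) (hw : ∀ n, 0 < w n) (hk : ∀ n, 0 < k n)
    (hk1 : Tendsto (fun n => (1 : ℝ) / k n) atTop (nhds 0))
    (hkh : ∃ c : ℝ, 0 < c ∧ ∀ᶠ n : ℕ in atTop, (k n : ℝ) ≤ c * (h n : ℝ))
    (hhkw : ∃ c : ℝ, 0 < c ∧ ∀ᶠ n : ℕ in atTop,
      (h n : ℝ) ≤ c * ((k n : ℝ) * (w n : ℝ) ^ 2)) :
    ∃ a b : ℝ, 0 < a ∧ a ≤ b ∧ ∀ᶠ n : ℕ in atTop,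
      a * ((w n : ℝ) * Real.sqrt ((h n : ℝ) * (k n : ℝ))) ≤ Lcol (k n) (h n) (w n) ∧
      Lcol (k n) (h n) (w n) ≤ b * ((w n : ℝ) * Real.sqrt ((h n : ℝ) * (k n : ℝ))) :=
  Lcol_asymp_mid_general h w k hh hk hk1 hkh hhkw
end

section
/- Let h = (h_1, …, h_n) ∈ ℤ^n be such that every partial sum η_m = h_1 + ⋯ + h_m (1 ≤ m ≤ n) is nonnegative. Then the map Φ sending an integral flow f ∈ I(h) to the assignment c with c_{i,j−1} = f(i,j) for all 1 ≤ i < j ≤ n+1 is a well-defined bijection from I(h) onto the set of Kostant pictures of height η = (η_1, …, η_n), and Φ is an isomorphism of partially ordered sets from the merge order on I(h) to the merge order on Kostant pictures of height η (identified with Lusztig data via a_{ij} = c_{ij}). -/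
open Filter

/-- An integral flow with net flow `(h, -∑ h)`: a nonnegative integer `f i j` on every
pair `i < j` of `Fin (n+1)` (zero otherwise) such that for each `k ≤ n` the net outflow
at `k` is `h k`. -/
def IsFlow {n : ℕ} (h : Fin n → ℤ) (f : Fin (n + 1) → Fin (n + 1) → ℕ) : Prop :=
  (∀ i j : Fin (n + 1), ¬i < j → f i j = 0) ∧
  ∀ k : Fin n,
    (∑ j : Fin (n + 1), if k.castSucc < j then (f k.castSucc j : ℤ) else 0) -
      (∑ i : Fin (n + 1), if i < k.castSucc then (f i k.castSucc : ℤ) else 0) = h k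

/-- Merge covering relation on integral flows: `f` covers `f'` iff they agree except
`f i j = f' i j + 1`, `f j k = f' j k + 1`, `f i k = f' i k - 1` for a single triple
`i < j < k`. -/
def FlowCover {n : ℕ} (f' f : Fin (n + 1) → Fin (n + 1) → ℕ) : Prop :=
  ∃ i j k : Fin (n + 1), i < j ∧ j < k ∧
    f i j = f' i j + 1 ∧ f j k = f' j k + 1 ∧ f i k + 1 = f' i k ∧
    ∀ p q : Fin (n + 1),
      (p, q) ≠ (i, j) → (p, q) ≠ (j, k) → (p, q) ≠ (i, k) → f p q = f' p q

/-- Merge covering relation on Kostant pictures (written in Lusztig data coordinates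
`a i j = c i j`): `b` is covered by `a` iff they agree except `b i j = a i j - 1`,
`b (j+1) k = a (j+1) k - 1`, `b i k = a i k + 1` for a single triple `i ≤ j < k`. -/
def KostantCover {n : ℕ} (b a : Fin n → Fin n → ℕ) : Prop :=
  ∃ (i j k : ℕ) (hi : i < n) (hj : j < n) (hj1 : j + 1 < n) (hk : k < n),
    i ≤ j ∧ j < k ∧
    b ⟨i, hi⟩ ⟨j, hj⟩ + 1 = a ⟨i, hi⟩ ⟨j, hj⟩ ∧
    b ⟨j + 1, hj1⟩ ⟨k, hk⟩ + 1 = a ⟨j + 1, hj1⟩ ⟨k, hk⟩ ∧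
    b ⟨i, hi⟩ ⟨k, hk⟩ = a ⟨i, hi⟩ ⟨k, hk⟩ + 1 ∧
    ∀ p q : Fin n, ((p : ℕ), (q : ℕ)) ≠ (i, j) → ((p : ℕ), (q : ℕ)) ≠ (j + 1, k) →
      ((p : ℕ), (q : ℕ)) ≠ (i, k) → b p q = a p q

/-- The map `Φ` sending a flow `f` to the assignment `c` with `c_{i,j-1} = f(i,j)`. -/
def flowToKostant {n : ℕ} (f : Fin (n + 1) → Fin (n + 1) → ℕ) : Fin n → Fin n → ℕ :=
  fun i j => if i ≤ j then f i.castSucc j.succ else 0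

/-!
Away from the diagonal, `Φ` only renames coordinates, with inverse `Ψ c (i, j) = c (i, j - 1)`.
The heights match because, for an upper-triangular flow, the net outflow summed over the
vertices `≤ m` equals the total flow across the cut between `m` and `m + 1`, which is
`∑_{i ≤ m ≤ j} c i j`; partial sums determine a sequence, so the height condition for `Φ f`
is equivalent to the flow conditions for `f`. A merge move on the flow side along `i < j < k`
is a merge move on the Kostant side along `i ≤ j - 1 < k - 1` and back, so `Φ` and `Ψ`
carry covers to covers and hence their reflexive-transitive closures to each other.
-/

open Finset

theorem eq_of_forall_sum_Iic_eq {ι M : Type*} [LinearOrder ι] [LocallyFiniteOrderBot ι]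
    [WellFoundedLT ι] [AddCancelCommMonoid M] {a b : ι → M}
    (h : ∀ m, ∑ k ∈ Iic m, a k = ∑ k ∈ Iic m, b k) : a = b := by
  funext m
  induction m using WellFoundedLT.induction with
  | _ m ih =>
    have hm := h m
    rw [← Iio_insert, sum_insert notMem_Iio_self, sum_insert notMem_Iio_self,
      sum_congr rfl fun k hk => ih k (mem_Iio.mp hk)] at hm
    exact add_right_cancel hm

theorem sum_outflow_sub_inflow {ι M : Type*} [Fintype ι] [DecidableEq ι] [AddCommGroup M]
    (f : ι → ι → M) (s : Finset ι) :
    ∑ k ∈ s, (∑ j, f k j - ∑ i, f i k) = ∑ i ∈ s, ∑ j ∈ sᶜ, f i j - ∑ i ∈ sᶜ, ∑ j ∈ s, f i j := by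
  simp only [sum_sub_distrib, ← sum_add_sum_compl s (fun j => f _ j)]
  rw [sum_comm (s := s) (t := univ), ← sum_add_sum_compl s, sum_add_distrib]
  abel

theorem sum_ite_le_eq_sum_Iic {ι M : Type*} [Fintype ι] [Preorder ι] [LocallyFiniteOrderBot ι]
    [DecidableLE ι] [AddCommMonoid M] (a : ι → M) (m : ι) :
    ∑ i, (if i ≤ m then a i else 0) = ∑ i ∈ Iic m, a i := by
  rw [← sum_filter, filter_ge_eq_Iic]

theorem sum_ite_le_and_le_eq_sum_Iic_Ici {ι M : Type*} [Fintype ι] [Preorder ι]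
    [LocallyFiniteOrderBot ι] [LocallyFiniteOrderTop ι] [DecidableLE ι] [AddCommMonoid M]
    (c : ι → ι → M) (m : ι) :
    ∑ i, ∑ j, (if i ≤ m ∧ m ≤ j then c i j else 0) = ∑ i ∈ Iic m, ∑ j ∈ Ici m, c i j := by
  simp only [ite_and, ← ite_sum_zero, ← sum_filter, filter_ge_eq_Iic, filter_le_eq_Ici]

theorem Fin.compl_Iic_castSucc {n : ℕ} (m : Fin n) : (Iic m.castSucc)ᶜ = Ici m.succ := by
  ext j
  simp [Fin.castSucc_lt_iff_succ_le]

section Flows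

variable {n : ℕ}

def kostantToFlow (c : Fin n → Fin n → ℕ) : Fin (n + 1) → Fin (n + 1) → ℕ :=
  fun i j => if hij : i < j then
    c ⟨i, by have := j.isLt; omega⟩ ⟨j - 1, by have := j.isLt; omega⟩
  else 0

theorem flowToKostant_mk (f : Fin (n + 1) → Fin (n + 1) → ℕ) {i j : Fin (n + 1)} (hij : i < j)
    {a b : ℕ} (ha : a < n) (hb : b < n) (hai : a = i) (hbj : b + 1 = j) :
    flowToKostant f ⟨a, ha⟩ ⟨b, hb⟩ = f i j := by
  have := Fin.lt_def.mp hij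
  rw [flowToKostant, if_pos (Fin.mk_le_mk.mpr (by omega))]
  congr 1 <;> ext <;> simp only [Fin.val_castSucc, Fin.val_succ] <;> omega

theorem kostantToFlow_mk (c : Fin n → Fin n → ℕ) {a b : ℕ} (ha : a < n) (hb : b < n) (hab : a ≤ b)
    {i j : Fin (n + 1)} (hai : (i : ℕ) = a) (hbj : (j : ℕ) = b + 1) :
    kostantToFlow c i j = c ⟨a, ha⟩ ⟨b, hb⟩ := by
  rw [kostantToFlow, dif_pos (Fin.lt_def.mpr (by omega))]
  congr 1 <;> ext <;> simp only <;> omega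

theorem kostantToFlow_flowToKostant {f : Fin (n + 1) → Fin (n + 1) → ℕ}
    (hf : ∀ i j, ¬i < j → f i j = 0) : kostantToFlow (flowToKostant f) = f := by
  funext i j
  by_cases hij : i < j
  · rw [kostantToFlow, dif_pos hij, flowToKostant_mk f hij _ _ rfl (by omega)]
  · rw [kostantToFlow, dif_neg hij, hf i j hij]

theorem flowToKostant_kostantToFlow {c : Fin n → Fin n → ℕ} (hc : ∀ i j, j < i → c i j = 0) :
    flowToKostant (kostantToFlow c) = c := by
  funext i j
  by_cases hij : i ≤ j
  · rw [flowToKostant, if_pos hij, kostantToFlow_mk c i.isLt j.isLt hij rfl rfl]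
  · rw [flowToKostant, if_neg hij, hc i j (not_le.mp hij)]

theorem flowToKostant_eq_zero_of_lt (f : Fin (n + 1) → Fin (n + 1) → ℕ) {i j : Fin n}
    (hji : j < i) : flowToKostant f i j = 0 :=
  if_neg (not_le.mpr hji)

theorem kostantToFlow_eq_zero_of_not_lt (c : Fin n → Fin n → ℕ) :
    ∀ i j, ¬i < j → kostantToFlow c i j = 0 :=
  fun _ _ hij => dif_neg hij

theorem sum_Iic_netOutflow_eq {f : Fin (n + 1) → Fin (n + 1) → ℕ}
    (hf : ∀ i j, ¬i < j → f i j = 0) (m : Fin n) :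
    ∑ k ∈ Iic m, (∑ j, (f k.castSucc j : ℤ) - ∑ i, (f i k.castSucc : ℤ)) =
      ∑ i ∈ Iic m, ∑ j ∈ Ici m, (flowToKostant f i j : ℤ) := by
  have hcut := sum_outflow_sub_inflow (fun i j => (f i j : ℤ)) (Iic m.castSucc)
  have hback : ∑ i ∈ (Iic m.castSucc)ᶜ, ∑ j ∈ Iic m.castSucc, (f i j : ℤ) = 0 := by
    refine sum_eq_zero fun i hi => sum_eq_zero fun j hj => ?_
    rw [mem_compl, mem_Iic, not_le] at hi
    rw [hf i j (not_lt.mpr ((mem_Iic.mp hj).trans hi.le)), Nat.cast_zero]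
  rw [hback, sub_zero, Fin.compl_Iic_castSucc, ← Fin.map_castSuccEmb_Iic, ← Fin.map_succEmb_Ici,
    sum_map] at hcut
  simp only [sum_map, Fin.coe_castSuccEmb, Fin.coe_succEmb] at hcut
  rw [hcut]
  refine sum_congr rfl fun i hi => sum_congr rfl fun j hj => ?_
  rw [flowToKostant, if_pos ((mem_Iic.mp hi).trans (mem_Ici.mp hj))]

theorem isFlow_iff_netOutflow_eq {h : Fin n → ℤ} {f : Fin (n + 1) → Fin (n + 1) → ℕ}
    (hf : ∀ i j, ¬i < j → f i j = 0) :
    IsFlow h f ↔ ∀ k : Fin n, ∑ j, (f k.castSucc j : ℤ) - ∑ i, (f i k.castSucc : ℤ) = h k := by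
  have hzero : ∀ {i j}, ¬i < j → (f i j : ℤ) = 0 := fun hij => by rw [hf _ _ hij, Nat.cast_zero]
  have hout (k : Fin (n + 1)) : (∑ j, if k < j then (f k j : ℤ) else 0) = ∑ j, (f k j : ℤ) :=
    sum_congr rfl fun j _ => ite_eq_left_iff.mpr fun hkj => (hzero hkj).symm
  have hin (k : Fin (n + 1)) : (∑ i, if i < k then (f i k : ℤ) else 0) = ∑ i, (f i k : ℤ) :=
    sum_congr rfl fun i _ => ite_eq_left_iff.mpr fun hik => (hzero hik).symm
  simp only [IsFlow, hout, hin]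
  exact and_iff_right hf

theorem isFlow_iff_isKostant_flowToKostant {h : Fin n → ℤ}
    (hpos : ∀ m : Fin n, 0 ≤ ∑ i : Fin n, if i ≤ m then h i else 0)
    {f : Fin (n + 1) → Fin (n + 1) → ℕ} (hf : ∀ i j, ¬i < j → f i j = 0) :
    IsFlow h f ↔ IsKostant (fun m : Fin n => (∑ i : Fin n, if i ≤ m then h i else 0).toNat)
      (flowToKostant f) := by
  have hheight (m : Fin n) :
      (∑ i, ∑ j, if i ≤ m ∧ m ≤ j then flowToKostant f i j else 0) =
          (∑ i : Fin n, if i ≤ m then h i else 0).toNat ↔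
        ∑ k ∈ Iic m, (∑ j, (f k.castSucc j : ℤ) - ∑ i, (f i k.castSucc : ℤ)) =
          ∑ k ∈ Iic m, h k := by
    rw [← Nat.cast_inj (R := ℤ), Int.toNat_of_nonneg (hpos m), sum_ite_le_eq_sum_Iic]
    push_cast
    rw [sum_ite_le_and_le_eq_sum_Iic_Ici, sum_Iic_netOutflow_eq hf]
  rw [isFlow_iff_netOutflow_eq hf, IsKostant,
    and_iff_right fun i j hji => flowToKostant_eq_zero_of_lt f hji]
  simp only [hheight]
  exact ⟨fun H m => sum_congr rfl fun k _ => H k, fun H => congrFun (eq_of_forall_sum_Iic_eq H)⟩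

theorem FlowCover.kostantCover {f' f : Fin (n + 1) → Fin (n + 1) → ℕ} (hc : FlowCover f' f) :
    KostantCover (flowToKostant f') (flowToKostant f) := by
  obtain ⟨i, j, k, hij, hjk, hfij, hfjk, hfik, hrest⟩ := hc
  have := Fin.lt_def.mp hij
  have := Fin.lt_def.mp hjk
  have := k.isLt
  refine ⟨i, j - 1, k - 1, by omega, by omega, by omega, by omega, by omega, by omega,
    ?_, ?_, ?_, fun p q hp1 hp2 hp3 => ?_⟩
  · rw [flowToKostant_mk f hij _ _ rfl (by omega), flowToKostant_mk f' hij _ _ rfl (by omega)]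
    omega
  · rw [flowToKostant_mk f hjk _ _ (by omega) (by omega),
      flowToKostant_mk f' hjk _ _ (by omega) (by omega)]
    omega
  · rw [flowToKostant_mk f (hij.trans hjk) _ _ rfl (by omega),
      flowToKostant_mk f' (hij.trans hjk) _ _ rfl (by omega)]
    omega
  · simp only [ne_eq, Prod.mk.injEq] at hp1 hp2 hp3
    unfold flowToKostant
    split_ifs
    · refine (hrest _ _ ?_ ?_ ?_).symm <;>
        simp only [ne_eq, Prod.mk.injEq, Fin.ext_iff, Fin.val_castSucc, Fin.val_succ] <;> omega
    · rfl

theorem KostantCover.flowCover {b a : Fin n → Fin n → ℕ} (hc : KostantCover b a) :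
    FlowCover (kostantToFlow b) (kostantToFlow a) := by
  obtain ⟨i, j, k, hi, hj, hj1, hk, hij, hjk, hbij, hbjk, hbik, hrest⟩ := hc
  refine ⟨⟨i, by omega⟩, ⟨j + 1, by omega⟩, ⟨k + 1, by omega⟩, Fin.mk_lt_mk.mpr (by omega),
    Fin.mk_lt_mk.mpr (by omega), ?_, ?_, ?_, fun p q hp1 hp2 hp3 => ?_⟩
  · rw [kostantToFlow_mk a hi hj hij rfl rfl, kostantToFlow_mk b hi hj hij rfl rfl]
    omega
  · rw [kostantToFlow_mk a hj1 hk (by omega) rfl rfl, kostantToFlow_mk b hj1 hk (by omega) rfl rfl]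
    omega
  · rw [kostantToFlow_mk a hi hk (by omega) rfl rfl, kostantToFlow_mk b hi hk (by omega) rfl rfl]
    omega
  · simp only [ne_eq, Prod.mk.injEq, Fin.ext_iff] at hp1 hp2 hp3
    unfold kostantToFlow
    split_ifs with hpq
    · have := Fin.lt_def.mp hpq
      refine (hrest _ _ ?_ ?_ ?_).symm <;> simp only [ne_eq, Prod.mk.injEq] <;> omega
    · rfl

end Flows

/-- `Φ` is a bijection from `I(h)` onto the Kostant pictures of height
`η = (h₁, h₁+h₂, …)`, and an isomorphism from the merge order on `I(h)` to the merge
order on Kostant pictures. -/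
theorem flow_kostant_order_iso {n : ℕ} (h : Fin n → ℤ)
    (hpos : ∀ m : Fin n, 0 ≤ ∑ i : Fin n, if i ≤ m then h i else 0) :
    Set.BijOn flowToKostant {f | IsFlow h f}
      {c | IsKostant (fun m : Fin n => (∑ i : Fin n, if i ≤ m then h i else 0).toNat) c} ∧
    ∀ f f' : Fin (n + 1) → Fin (n + 1) → ℕ, IsFlow h f → IsFlow h f' →
      (Relation.ReflTransGen FlowCover f' f ↔
        Relation.ReflTransGen KostantCover (flowToKostant f') (flowToKostant f)) := by
  refine ⟨⟨fun f hf => (isFlow_iff_isKostant_flowToKostant hpos hf.1).mp hf, ?_, ?_⟩, ?_⟩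
  · intro f hf f' hf' hff'
    rw [← kostantToFlow_flowToKostant hf.1, hff', kostantToFlow_flowToKostant hf'.1]
  · intro c hc
    have hround := flowToKostant_kostantToFlow hc.1
    refine ⟨kostantToFlow c, ?_, hround⟩
    exact (isFlow_iff_isKostant_flowToKostant hpos (kostantToFlow_eq_zero_of_not_lt c)).mpr
      (by rwa [hround])
  · intro f f' hf hf'
    refine ⟨fun hff' => hff'.lift flowToKostant fun _ _ => FlowCover.kostantCover, fun hcc' => ?_⟩
    rw [← kostantToFlow_flowToKostant hf.1, ← kostantToFlow_flowToKostant hf'.1]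
    exact hcc'.lift kostantToFlow fun _ _ => KostantCover.flowCover
end
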